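/- arXiv:2210.11855 — 6 statements merged into one kernel-verified Lean document; each statement's English description precedes it below -/
import Mathlib

section
/- Let A be a unital C*-algebra, (Ω, P) a probability space, and c : Ω → A a Bochner-integrable random variable such that c(ω) is a positive element of A for every ω ∈ Ω and such that ω ↦ c(ω)^{1/2} is Bochner integrable. Then ∫_Ω c(ω)^{1/2} dP(ω) ≤ (∫_Ω c(ω) dP(ω))^{1/2}, where ≤ is the order on A given by positivity (a ≤ b iff b − a is positive) and a^{1/2} denotes the unique positive square root of a positive element a given by the continuous functional calculus. (Lemma 4, C*-algebra-valued Jensen inequality.) -/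
open MeasureTheory
open scoped BigOperators
open scoped NNReal ENNReal

section Aux
variable {A : Type*} [CStarAlgebra A] [PartialOrder A] [StarOrderedRing A]

lemma aux_norm_iff {a s : A} (ha : 0 ≤ a) (hs : 0 ≤ s) :
    ‖CFC.sqrt a * s ^ (-(1/2) : ℝ)‖ ≤ 1 ↔
      s ^ (-(1/2) : ℝ) * a * s ^ (-(1/2) : ℝ) ≤ 1 := by
  have hp : (0 : A) ≤ s ^ (-(1/2) : ℝ) * a * s ^ (-(1/2) : ℝ) := by
    have := star_left_conjugate_nonneg ha (s ^ (-(1/2) : ℝ))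
    rwa [(IsSelfAdjoint.of_nonneg CFC.rpow_nonneg).star_eq] at this
  rw [← sq_le_one_iff₀ (norm_nonneg _), sq, ← CStarRing.norm_star_mul_self, star_mul,
    (IsSelfAdjoint.of_nonneg (CFC.sqrt_nonneg a)).star_eq,
    (IsSelfAdjoint.of_nonneg CFC.rpow_nonneg).star_eq]
  rw [show s ^ (-(1/2) : ℝ) * CFC.sqrt a * (CFC.sqrt a * s ^ (-(1/2) : ℝ))
      = s ^ (-(1/2) : ℝ) * a * s ^ (-(1/2) : ℝ) by
    rw [← mul_assoc, mul_assoc (s ^ (-(1/2) : ℝ)), CFC.sqrt_mul_sqrt_self a ha]]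
  exact CStarAlgebra.norm_le_one_iff_of_nonneg _ hp

lemma aux_norm_le_one {a s : A} (ha : 0 ≤ a) (hs : 0 ≤ s) (hsu : IsUnit s) (h : a ≤ s) :
    ‖CFC.sqrt a * s ^ (-(1/2) : ℝ)‖ ≤ 1 := by
  rw [aux_norm_iff ha hs]
  calc s ^ (-(1/2) : ℝ) * a * s ^ (-(1/2) : ℝ)
      ≤ s ^ (-(1/2) : ℝ) * s * s ^ (-(1/2) : ℝ) :=
        conjugate_le_conjugate_of_nonneg h CFC.rpow_nonneg
    _ = 1 := CFC.conjugate_rpow_neg_one_half s (hsu.isStrictlyPositive hs)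

lemma aux_le_of_norm {a s : A} (ha : 0 ≤ a) (hs : 0 ≤ s) (hsu : IsUnit s)
    (h : ‖CFC.sqrt a * s ^ (-(1/2) : ℝ)‖ ≤ 1) : a ≤ s := by
  rw [aux_norm_iff ha hs] at h
  have hss : (0 : ℝ≥0) ∉ spectrum ℝ≥0 s := by rwa [spectrum.zero_notMem_iff ℝ≥0]
  have hunit : CFC.sqrt s * s ^ (-(1/2) : ℝ) = 1 := by
    rw [CFC.sqrt_eq_rpow, ← CFC.rpow_add hsu]
    norm_num
    exact CFC.rpow_zero s hs
  have hunit' : s ^ (-(1/2) : ℝ) * CFC.sqrt s = 1 := by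
    rw [CFC.sqrt_eq_rpow, ← CFC.rpow_add hsu]
    norm_num
    exact CFC.rpow_zero s hs
  calc a = CFC.sqrt s * (s ^ (-(1/2) : ℝ) * a * s ^ (-(1/2) : ℝ)) * CFC.sqrt s := by
        rw [show CFC.sqrt s * (s ^ (-(1/2) : ℝ) * a * s ^ (-(1/2) : ℝ)) * CFC.sqrt s
            = (CFC.sqrt s * s ^ (-(1/2) : ℝ)) * a * (s ^ (-(1/2) : ℝ) * CFC.sqrt s) by
          simp only [mul_assoc]]
        rw [hunit, hunit', one_mul, mul_one]
    _ ≤ CFC.sqrt s * 1 * CFC.sqrt s := conjugate_le_conjugate_of_nonneg h (CFC.sqrt_nonneg _)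
    _ = s := by rw [mul_one, CFC.sqrt_mul_sqrt_self s hs]

end Aux

lemma aux_spectralRadius_mul_comm {A : Type*} [NormedRing A] [NormedAlgebra ℂ A]
    (a b : A) : spectralRadius ℂ (a * b) = spectralRadius ℂ (b * a) := by
  have key : ∀ x y : A, spectralRadius ℂ (x * y) ≤ spectralRadius ℂ (y * x) := by
    intro x y
    rw [spectralRadius, spectralRadius]
    refine iSup₂_le fun k hk => ?_
    rcases eq_or_ne k 0 with rfl | hk0
    · simp
    · have : k ∈ spectrum ℂ (y * x) := by
        have := (spectrum.unit_mem_mul_comm (a := x) (b := y) (r := Units.mk0 k hk0))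
        simpa using this.mp (by simpa using hk)
      exact le_iSup₂ (f := fun k (_ : k ∈ spectrum ℂ (y * x)) => (‖k‖₊ : ℝ≥0∞)) k this
  exact le_antisymm (key a b) (key b a)

lemma aux_le_sqrt_of_isUnit {A : Type*} [CStarAlgebra A] [PartialOrder A] [StarOrderedRing A]
    {b m : A} (hb : 0 ≤ b) (hm : 0 ≤ m) (hmu : IsUnit m) (h : b * b ≤ m) :
    b ≤ CFC.sqrt m := by
  have hbb : (0 : A) ≤ b * b := by
    simpa [(IsSelfAdjoint.of_nonneg hb).star_eq] using star_mul_self_nonneg b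
  have hms : (0 : ℝ≥0) ∉ spectrum ℝ≥0 m := by rwa [spectrum.zero_notMem_iff ℝ≥0]
  have hsu : IsUnit (CFC.sqrt m) := by
    rw [← spectrum.zero_notMem_iff ℝ≥0, CFC.sqrt_eq_cfc, cfc_map_spectrum NNReal.sqrt m]
    rintro ⟨x, hx, hx0⟩
    have : x = 0 := by
      have := congrArg (fun t : ℝ≥0 => t * t) hx0
      simpa [NNReal.mul_self_sqrt] using this
    exact hms (this ▸ hx)
  have h1 : ‖b * m ^ (-(1/2) : ℝ)‖ ≤ 1 := by
    have := aux_norm_le_one hbb hm hmu h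
    rwa [CFC.sqrt_mul_self b hb] at this
  refine aux_le_of_norm hb (CFC.sqrt_nonneg _) hsu ?_
  set q : A := m ^ (-(1/4) : ℝ) with hq_def
  have hqm : CFC.sqrt m ^ (-(1/2) : ℝ) = q := by
    rw [CFC.rpow_sqrt m _ hmu hm]
    norm_num
    rw [hq_def]
  rw [hqm]
  have hq : (0 : A) ≤ q := CFC.rpow_nonneg
  have hp : (0 : A) ≤ q * b * q := by
    have := star_left_conjugate_nonneg hb q
    rwa [(IsSelfAdjoint.of_nonneg hq).star_eq] at this
  have hqq : q * q = m ^ (-(1/2) : ℝ) := by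
    rw [hq_def, ← CFC.rpow_add hmu]
    norm_num
  nontriviality A
  have hp' : (0 : A) ≤ q * (b * q) := mul_assoc q b q ▸ hp
  have hrad : (‖q * b * q‖₊ : ℝ≥0∞) ≤ 1 := by
    calc (‖q * b * q‖₊ : ℝ≥0∞) = spectralRadius ℂ (q * (b * q)) := by
          rw [mul_assoc]
          exact ((IsSelfAdjoint.of_nonneg hp').spectralRadius_eq_nnnorm).symm
      _ = spectralRadius ℂ (b * (q * q)) := by rw [aux_spectralRadius_mul_comm, mul_assoc]
      _ ≤ ‖b * (q * q)‖₊ := spectrum.spectralRadius_le_nnnorm _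
      _ ≤ 1 := by
          rw [hqq]
          exact_mod_cast (show ‖b * m ^ (-(1/2):ℝ)‖₊ ≤ 1 by exact_mod_cast h1)
  have hpn : ‖CFC.sqrt b * q‖ ≤ 1 := by
    rw [← sq_le_one_iff₀ (norm_nonneg _), sq, ← CStarRing.norm_star_mul_self, star_mul,
      (IsSelfAdjoint.of_nonneg (CFC.sqrt_nonneg b)).star_eq,
      (IsSelfAdjoint.of_nonneg hq).star_eq]
    rw [show q * CFC.sqrt b * (CFC.sqrt b * q) = q * b * q by
      rw [← mul_assoc, mul_assoc q, CFC.sqrt_mul_sqrt_self b hb]]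
    have : ‖q * b * q‖₊ ≤ 1 := by exact_mod_cast hrad
    exact_mod_cast this
  exact hpn

section Aux2
variable {A : Type*} [CStarAlgebra A] [PartialOrder A] [StarOrderedRing A]

lemma aux_algebraMap_nonneg (r : ℝ≥0) : (0:A) ≤ algebraMap ℝ≥0 A r := by
  rw [← cfc_const r (0 : A) (by simp)]
  exact cfc_predicate _ _

lemma aux_nnreal_sqrt_add_le (x ε : ℝ≥0) :
    NNReal.sqrt (x + ε) ≤ NNReal.sqrt x + NNReal.sqrt ε := by
  rw [← NNReal.sqrt_sq (NNReal.sqrt x + NNReal.sqrt ε), NNReal.sqrt_le_sqrt]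
  calc x + ε = NNReal.sqrt x ^ 2 + NNReal.sqrt ε ^ 2 := by rw [NNReal.sq_sqrt, NNReal.sq_sqrt]
    _ ≤ (NNReal.sqrt x + NNReal.sqrt ε) ^ 2 := by
        rw [add_sq]
        exact add_le_add_left (le_add_of_nonneg_right (zero_le : (0:ℝ≥0) ≤ _)) _

lemma aux_sqrt_add_algebraMap_le {m : A} (hm : 0 ≤ m) (ε : ℝ≥0) :
    CFC.sqrt (m + algebraMap ℝ≥0 A ε) ≤ CFC.sqrt m + algebraMap ℝ≥0 A (NNReal.sqrt ε) := by
  have e1 : m + algebraMap ℝ≥0 A ε = cfc (fun x : ℝ≥0 => x + ε) m := by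
    rw [cfc_add m _ _, cfc_id' ℝ≥0 m, cfc_const ε m]
  calc CFC.sqrt (m + algebraMap ℝ≥0 A ε)
      = cfc (fun x : ℝ≥0 => NNReal.sqrt (x + ε)) m := by
        rw [e1, CFC.sqrt_eq_cfc, ← cfc_comp NNReal.sqrt (fun x : ℝ≥0 => x + ε) m]
        rfl
    _ ≤ cfc (fun x : ℝ≥0 => NNReal.sqrt x + NNReal.sqrt ε) m :=
        cfc_mono fun x _ => aux_nnreal_sqrt_add_le x ε
    _ = CFC.sqrt m + algebraMap ℝ≥0 A (NNReal.sqrt ε) := by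
        rw [cfc_add m _ _, cfc_const _ m, CFC.sqrt_eq_cfc]

lemma aux_le_sqrt {b m : A} (hb : 0 ≤ b) (hm : 0 ≤ m) (h : b * b ≤ m) :
    b ≤ CFC.sqrt m := by
  have key : ∀ ε : ℝ≥0, 0 < ε → b ≤ CFC.sqrt m + algebraMap ℝ≥0 A ε := by
    intro ε hε
    set mε : A := m + algebraMap ℝ≥0 A (ε ^ 2) with hmε_def
    have hmε : (0:A) ≤ mε := add_nonneg hm (aux_algebraMap_nonneg _)
    have hunit : IsUnit mε := by
      refine CStarAlgebra.isUnit_of_le (algebraMap ℝ≥0 A (ε ^ 2)) (le_add_of_nonneg_left hm)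
        (IsUnit.isStrictlyPositive ?_ (aux_algebraMap_nonneg _))
      exact (isUnit_iff_ne_zero.mpr (by positivity)).map (algebraMap ℝ≥0 A)
    have hle : b * b ≤ mε := h.trans (le_add_of_nonneg_right (aux_algebraMap_nonneg _))
    calc b ≤ CFC.sqrt mε := aux_le_sqrt_of_isUnit hb hmε hunit hle
      _ ≤ CFC.sqrt m + algebraMap ℝ≥0 A (NNReal.sqrt (ε ^ 2)) := aux_sqrt_add_algebraMap_le hm _
      _ = CFC.sqrt m + algebraMap ℝ≥0 A ε := by rw [NNReal.sqrt_sq]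
  have h0 : Filter.Tendsto (fun n : ℕ => (((n + 1 : ℕ) : ℝ≥0))⁻¹) Filter.atTop (nhds 0) :=
    (tendsto_inv_atTop_nhds_zero_nat (𝕜 := ℝ≥0)).comp (Filter.tendsto_add_atTop_nat 1)
  have h1 : Filter.Tendsto (fun n : ℕ => algebraMap ℝ≥0 A (((n + 1 : ℕ) : ℝ≥0))⁻¹)
      Filter.atTop (nhds 0) := by
    simpa [map_zero, Function.comp_def] using ((continuous_algebraMap ℝ≥0 A).tendsto 0).comp h0
  have seq : Filter.Tendsto
      (fun n : ℕ => CFC.sqrt m + algebraMap ℝ≥0 A (((n + 1 : ℕ) : ℝ≥0))⁻¹) Filter.atTop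
      (nhds (CFC.sqrt m)) := by
    simpa using Filter.Tendsto.add (tendsto_const_nhds (x := CFC.sqrt m)) h1
  exact ge_of_tendsto' seq fun n =>
    key _ (by positivity)

end Aux2

open MeasureTheory in
lemma aux_integral_nonneg {A : Type*} [CStarAlgebra A] [PartialOrder A] [StarOrderedRing A]
    {Ω : Type*} [MeasurableSpace Ω] {P : Measure Ω} [IsProbabilityMeasure P]
    {f : Ω → A} (hf : ∀ ω, 0 ≤ f ω) (hfi : Integrable f P) : 0 ≤ ∫ ω, f ω ∂P := by
  have hconv : Convex ℝ {a : A | 0 ≤ a} := fun a ha b hb t s ht hs _ =>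
    add_nonneg (smul_nonneg ht ha) (smul_nonneg hs hb)
  exact hconv.integral_mem CStarAlgebra.isClosed_nonneg (Filter.Eventually.of_forall hf) hfi



/-- **Lemma 4** (C*-algebra-valued Jensen inequality): if `c : Ω → A` is a Bochner-integrable
random variable on a probability space, taking positive values in a unital C*-algebra `A`, and
`ω ↦ √(c ω)` is Bochner integrable, then `∫ √(c ω) dP(ω) ≤ √(∫ c ω dP(ω))`, where `√` is the
square root given by the continuous functional calculus and `≤` is the positivity order. -/
theorem cstar_jensen_sqrt {A : Type*} [CStarAlgebra A] [PartialOrder A] [StarOrderedRing A]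
    {Ω : Type*} [MeasurableSpace Ω] (P : Measure Ω) [IsProbabilityMeasure P]
    (c : Ω → A) (hpos : ∀ ω, 0 ≤ c ω)
    (hint : Integrable c P) (hint' : Integrable (fun ω => CFC.sqrt (c ω)) P) :
    (∫ ω, CFC.sqrt (c ω) ∂P) ≤ CFC.sqrt (∫ ω, c ω ∂P) := by
  set b : A := ∫ ω, CFC.sqrt (c ω) ∂P with hb_def
  have hsq : ∀ ω, (0:A) ≤ CFC.sqrt (c ω) := fun _ => CFC.sqrt_nonneg _
  have hb : (0:A) ≤ b := aux_integral_nonneg hsq hint'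
  have hm : (0:A) ≤ ∫ ω, c ω ∂P := aux_integral_nonneg hpos hint
  refine aux_le_sqrt hb hm ?_
  have hint₁ : Integrable (fun ω => CFC.sqrt (c ω) * b) P := hint'.mul_const b
  have hint₂ : Integrable (fun ω => b * CFC.sqrt (c ω)) P := hint'.const_mul b
  have key : ∀ ω, (0:A) ≤ c ω - CFC.sqrt (c ω) * b - b * CFC.sqrt (c ω) + b * b := by
    intro ω
    have h := star_mul_self_nonneg (CFC.sqrt (c ω) - b)
    have hst : star (CFC.sqrt (c ω) - b) = CFC.sqrt (c ω) - b := by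
      rw [star_sub, (IsSelfAdjoint.of_nonneg (CFC.sqrt_nonneg _)).star_eq,
        (IsSelfAdjoint.of_nonneg hb).star_eq]
    rw [hst] at h
    calc (0:A) ≤ (CFC.sqrt (c ω) - b) * (CFC.sqrt (c ω) - b) := h
      _ = c ω - CFC.sqrt (c ω) * b - b * CFC.sqrt (c ω) + b * b := by
          rw [sub_mul, mul_sub, mul_sub, CFC.sqrt_mul_sqrt_self (c ω) (hpos ω)]
          abel
  have hfi : Integrable
      (fun ω => c ω - CFC.sqrt (c ω) * b - b * CFC.sqrt (c ω) + b * b) P :=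
    ((hint.sub hint₁).sub hint₂).add (integrable_const _)
  have h0 : (0:A) ≤ ∫ ω, (c ω - CFC.sqrt (c ω) * b - b * CFC.sqrt (c ω) + b * b) ∂P :=
    aux_integral_nonneg key hfi
  have e₁ : ∫ ω, CFC.sqrt (c ω) * b ∂P = b * b := by
    have := (((ContinuousLinearMap.mul ℝ A).flip b).integral_comp_comm hint')
    simpa using this
  have e₂ : ∫ ω, b * CFC.sqrt (c ω) ∂P = b * b := by
    simpa using ((ContinuousLinearMap.mul ℝ A b).integral_comp_comm hint')
  have hcomp : ∫ ω, (c ω - CFC.sqrt (c ω) * b - b * CFC.sqrt (c ω) + b * b) ∂P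
      = (∫ ω, c ω ∂P) - b * b := by
    calc ∫ ω, (c ω - CFC.sqrt (c ω) * b - b * CFC.sqrt (c ω) + b * b) ∂P
        = (∫ ω, (c ω - CFC.sqrt (c ω) * b - b * CFC.sqrt (c ω)) ∂P) + ∫ _ : Ω, b * b ∂P :=
          integral_add ((hint.sub hint₁).sub hint₂) (integrable_const _)
      _ = ((∫ ω, (c ω - CFC.sqrt (c ω) * b) ∂P) - ∫ ω, b * CFC.sqrt (c ω) ∂P)
            + ∫ _ : Ω, b * b ∂P :=
          congrArg (fun t => t + ∫ _ : Ω, b * b ∂P) (integral_sub (hint.sub hint₁) hint₂)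
      _ = (((∫ ω, c ω ∂P) - ∫ ω, CFC.sqrt (c ω) * b ∂P) - ∫ ω, b * CFC.sqrt (c ω) ∂P)
            + ∫ _ : Ω, b * b ∂P :=
          congrArg (fun t => (t - ∫ ω, b * CFC.sqrt (c ω) ∂P) + ∫ _ : Ω, b * b ∂P)
            (integral_sub hint hint₁)
      _ = (∫ ω, c ω ∂P) - b * b := by
          rw [e₁, e₂, integral_const]
          simp only [probReal_univ, one_smul]
          abel
  rw [hcomp] at h0
  exact sub_nonneg.mp h0
end

section
/- Let X be a set and let k : X × X → ℂ^{p×p} be a map such that k(x,y) is a circulant matrix for all x, y ∈ X, and such that k is positive definite with circulant coefficients: for all n ∈ ℕ, all x_1, …, x_n ∈ X, and all circulant matrices c_1, …, c_n ∈ ℂ^{p×p}, the matrix Σ_{i,j=1}^n c_iᴴ · k(x_i, x_j) · c_j is positive semidefinite. Then for every integer s ≥ 1, the kernel (x, y) ↦ k(x,y)^s (s-fold matrix power) is again positive definite with circulant coefficients in the same sense. (Key lemma in the proof of Proposition 9: composing a circulant-valued positive definite kernel with a power series with nonnegative coefficients preserves positive definiteness.) -/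
open Matrix
open scoped BigOperators ComplexOrder

/-- A `p × p` matrix is circulant if its `(i,j)` entry depends only on `j - i`. -/
def IsCirculantMat (p : ℕ) (M : Matrix (ZMod p) (ZMod p) ℂ) : Prop :=
  ∀ i j : ZMod p, M i j = M 0 (j - i)

/-- A matrix-valued kernel is positive definite with circulant coefficients if all Gram-type
combinations with circulant coefficient matrices are positive semidefinite. -/
def IsPDKernelCirc (p : ℕ) [NeZero p] {X : Type*} (k : X → X → Matrix (ZMod p) (ZMod p) ℂ) : Prop :=
  ∀ (n : ℕ) (x : Fin n → X) (c : Fin n → Matrix (ZMod p) (ZMod p) ℂ),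
    (∀ i, IsCirculantMat p (c i)) →
      (∑ i : Fin n, ∑ j : Fin n, (c i)ᴴ * k (x i) (x j) * c j).PosSemidef

namespace PowPDAux

set_option linter.unusedSectionVars false

variable {p : ℕ} [NeZero p]

/-- The standard additive character of `ZMod p`, valued in `ℂ`. -/
noncomputable def ch (p : ℕ) [NeZero p] (t : ZMod p) : ℂ := ZMod.stdAddChar t

lemma ch_zero : ch p 0 = 1 := by simp [ch]

lemma ch_add (a b : ZMod p) : ch p (a + b) = ch p a * ch p b := by
  simp [ch, AddChar.map_add_eq_mul]

lemma ch_conj (a : ZMod p) : (starRingEnd ℂ) (ch p a) = ch p (-a) := by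
  have h1 : ch p a * ch p (-a) = 1 := by
    rw [← ch_add, add_neg_cancel, ch_zero]
  have habs : ‖ch p a‖ = 1 := by
    simp [ch, ZMod.stdAddChar_apply, Circle.norm_coe]
  rw [← Complex.inv_eq_conj habs]
  exact (eq_inv_of_mul_eq_one_left (by rw [mul_comm] at h1; exact h1)).symm

lemma ch_sum (d : ZMod p) : ∑ m : ZMod p, ch p (m * d) = if d = 0 then (p : ℂ) else 0 := by
  split_ifs with hd
  · subst hd; simp [ch_zero, mul_zero, ch, Finset.card_univ, ZMod.card]
  · have hprim := ZMod.isPrimitive_stdAddChar p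
    have hne : AddChar.mulShift (ZMod.stdAddChar (N := p)) d ≠ 0 := by
      rw [← AddChar.one_eq_zero]
      exact hprim hd
    have := (AddChar.sum_eq_zero_iff_ne_zero).mpr hne
    calc ∑ m : ZMod p, ch p (m * d)
        = ∑ m : ZMod p, AddChar.mulShift (ZMod.stdAddChar (N := p)) d m := by
          simp [ch, AddChar.mulShift_apply, mul_comm]
      _ = 0 := this

/-- the `m`-th eigenvalue (Fourier coefficient) of the circulant generated by `v`. -/
noncomputable def ev (m : ZMod p) (v : ZMod p → ℂ) : ℂ := ∑ t, v t * ch p (-(m * t))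

lemma ev_conv (m : ZMod p) (v w : ZMod p → ℂ) :
    ev m (circulant v *ᵥ w) = ev m v * ev m w := by
  unfold ev
  rw [Finset.sum_mul_sum]
  have : ∀ t : ZMod p, (circulant v *ᵥ w) t * ch p (-(m * t))
      = ∑ u, v (t - u) * w u * ch p (-(m * t)) := by
    intro t
    simp [mulVec, dotProduct, circulant_apply, Finset.sum_mul]
  calc ∑ t, (circulant v *ᵥ w) t * ch p (-(m * t))
      = ∑ t, ∑ u, v (t - u) * w u * ch p (-(m * t)) := Finset.sum_congr rfl fun t _ => this t
    _ = ∑ u, ∑ t, v (t - u) * w u * ch p (-(m * t)) := Finset.sum_comm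
    _ = ∑ u, ∑ a, v a * ch p (-(m * a)) * (w u * ch p (-(m * u))) := by
        refine Finset.sum_congr rfl fun u _ => ?_
        refine (Fintype.sum_equiv (Equiv.addRight u)
          (fun a => v a * ch p (-(m * a)) * (w u * ch p (-(m * u))))
          (fun t => v (t - u) * w u * ch p (-(m * t))) ?_).symm
        intro a
        have harg : -(m * (a + u)) = -(m * a) + -(m * u) := by ring
        simp only [Equiv.coe_addRight, add_sub_cancel_right, harg, ch_add]
        ring
    _ = ∑ a, ∑ u, v a * ch p (-(m * a)) * (w u * ch p (-(m * u))) := Finset.sum_comm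

lemma ev_star (m : ZMod p) (v : ZMod p → ℂ) :
    ev m (fun t => (starRingEnd ℂ) (v (-t))) = (starRingEnd ℂ) (ev m v) := by
  unfold ev
  rw [map_sum]
  refine Fintype.sum_equiv (Equiv.neg (ZMod p)) _ _ fun t => ?_
  rw [Equiv.neg_apply, _root_.map_mul, ch_conj]
  ring_nf

lemma ev_sum {ι : Type*} (s : Finset ι) (m : ZMod p) (f : ι → ZMod p → ℂ) :
    ev m (fun t => ∑ i ∈ s, f i t) = ∑ i ∈ s, ev m (f i) := by
  unfold ev
  rw [Finset.sum_comm]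
  exact Finset.sum_congr rfl fun t _ => Finset.sum_mul ..

lemma inv_formula (v : ZMod p → ℂ) (d : ZMod p) :
    ∑ m : ZMod p, ev m v * ch p (m * d) = (p : ℂ) * v d := by
  unfold ev
  have : ∀ m : ZMod p, (∑ t, v t * ch p (-(m * t))) * ch p (m * d)
      = ∑ t, v t * ch p (m * (d - t)) := by
    intro m
    rw [Finset.sum_mul]
    refine Finset.sum_congr rfl fun t _ => ?_
    have harg : m * (d - t) = -(m * t) + m * d := by ring
    rw [harg, ch_add]; ring
  rw [Finset.sum_congr rfl fun m _ => this m, Finset.sum_comm]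
  have : ∀ t : ZMod p, ∑ m : ZMod p, v t * ch p (m * (d - t))
      = v t * (if d - t = 0 then (p : ℂ) else 0) := by
    intro t; rw [← Finset.mul_sum, ch_sum]
  rw [Finset.sum_congr rfl fun t _ => this t, Finset.sum_eq_single d]
  · simp [mul_comm]
  · intro b _ hb
    have : ¬ (d - b = 0) := fun h => hb (by linear_combination -h)
    simp [this]
  · simp

lemma conj_of_nonneg {z : ℂ} (h : 0 ≤ z) : (starRingEnd ℂ) z = z := by
  rw [Complex.conj_eq_iff_im]
  exact (Complex.nonneg_iff.mp h).2.symm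

lemma im_of_nonneg {z : ℂ} (h : 0 ≤ z) : z.im = 0 :=
  (Complex.nonneg_iff.mp h).2.symm

lemma dot_single {N : Type*} [Fintype N] [DecidableEq N] (M : Matrix N N ℂ) (i j : N) :
    star (Pi.single i (1:ℂ)) ⬝ᵥ M *ᵥ Pi.single j (1:ℂ) = M i j := by
  simp [dotProduct, mulVec, Pi.single_apply, apply_ite, mul_ite, ite_mul]

lemma posSemidef_of_forall {N : Type*} [Fintype N] [DecidableEq N] (A : Matrix N N ℂ)
    (h : ∀ x : N → ℂ, 0 ≤ star x ⬝ᵥ A *ᵥ x) : A.PosSemidef := by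
  refine PosSemidef.of_dotProduct_mulVec_nonneg ?_ h
  ext i j
  rw [conjTranspose_apply]
  set xi : N → ℂ := Pi.single i (1:ℂ)
  set xj : N → ℂ := Pi.single j (1:ℂ)
  have hB : ∀ y z : N → ℂ, star (y + z) ⬝ᵥ A *ᵥ (y + z)
      = star y ⬝ᵥ A *ᵥ y + star y ⬝ᵥ A *ᵥ z + (star z ⬝ᵥ A *ᵥ y + star z ⬝ᵥ A *ᵥ z) := by
    intro y z
    rw [star_add, add_dotProduct, mulVec_add, dotProduct_add, dotProduct_add]
  have h1 : ((star xi ⬝ᵥ A *ᵥ xj) + (star xj ⬝ᵥ A *ᵥ xi)).im = 0 := by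
    have := im_of_nonneg (h (xi + xj))
    rw [hB] at this
    have hii := im_of_nonneg (h xi)
    have hjj := im_of_nonneg (h xj)
    simp only [Complex.add_im] at this ⊢
    linarith
  have h2 : ((star xi ⬝ᵥ A *ᵥ (Complex.I • xj)) + (star (Complex.I • xj) ⬝ᵥ A *ᵥ xi)).im = 0 := by
    have := im_of_nonneg (h (xi + Complex.I • xj))
    rw [hB] at this
    have hii := im_of_nonneg (h xi)
    have hjj : (star (Complex.I • xj) ⬝ᵥ A *ᵥ (Complex.I • xj)).im = 0 := by
      exact im_of_nonneg (h (Complex.I • xj))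
    simp only [Complex.add_im] at this ⊢
    linarith
  have e1 : star xi ⬝ᵥ A *ᵥ (Complex.I • xj) = Complex.I * (star xi ⬝ᵥ A *ᵥ xj) := by
    rw [mulVec_smul, dotProduct_smul]; rfl
  have e2 : star (Complex.I • xj) ⬝ᵥ A *ᵥ xi
      = (starRingEnd ℂ) Complex.I * (star xj ⬝ᵥ A *ᵥ xi) := by
    rw [star_smul, smul_dotProduct]; rfl
  rw [e1, e2] at h2
  rw [dot_single, dot_single] at h1 h2
  set a : ℂ := A i j
  set b : ℂ := A j i
  apply Complex.ext
  · simp only [Complex.conj_I, neg_mul, Complex.add_im, Complex.neg_im, Complex.mul_im,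
      Complex.I_re, Complex.I_im] at h2
    rw [Complex.star_def, Complex.conj_re]
    linarith
  · simp only [Complex.add_im] at h1
    rw [Complex.star_def, Complex.conj_im]
    linarith

lemma isCirc_circulant (v : ZMod p → ℂ) : IsCirculantMat p (circulant v) := by
  intro i j
  simp only [circulant_apply, zero_sub, neg_sub]

lemma circ_of_isCirc (M : Matrix (ZMod p) (ZMod p) ℂ) (h : IsCirculantMat p M) :
    M = circulant (fun t => M 0 (-t)) := by
  ext i j
  rw [circulant_apply, neg_sub, h i j]

lemma circulant_sum {ι : Type*} (s : Finset ι) (f : ι → ZMod p → ℂ) :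
    ∑ i ∈ s, circulant (f i) = circulant (fun t => ∑ i ∈ s, f i t) := by
  ext a b
  simp [Matrix.sum_apply]

lemma pow_circulant (v : ZMod p → ℂ) (s : ℕ) :
    ∃ w, circulant v ^ s = circulant w ∧ ∀ m, ev m w = (ev m v) ^ s := by
  induction s with
  | zero =>
    refine ⟨Pi.single 0 1, by simp [Matrix.circulant_single_one], fun m => ?_⟩
    rw [pow_zero, ev, Finset.sum_eq_single 0]
    · simp [ch_zero]
    · intro b _ hb; simp [Pi.single_apply, hb]
    · simp
  | succ s ih =>
    obtain ⟨w, hw, hev⟩ := ih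
    refine ⟨circulant w *ᵥ v, ?_, fun m => ?_⟩
    · rw [pow_succ, hw, circulant_mul]
    · rw [ev_conv, hev, ← pow_succ]

lemma nat_inv_nonneg (q : ℕ) : (0 : ℂ) ≤ ((q : ℂ))⁻¹ := by
  have : ((q : ℂ))⁻¹ = (((q : ℝ))⁻¹ : ℝ) := by push_cast; rfl
  rw [this, Complex.zero_le_real]
  positivity

lemma circulant_posSemidef (v : ZMod p → ℂ) (h : ∀ m, 0 ≤ ev m v) :
    (circulant v).PosSemidef := by
  apply posSemidef_of_forall
  intro y
  have hq : star y ⬝ᵥ circulant v *ᵥ y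
      = ∑ a, ∑ b, (starRingEnd ℂ) (y a) * (v (a - b) * y b) := by
    simp [dotProduct, mulVec, circulant_apply, Finset.mul_sum, mul_assoc]
  set F : ZMod p → ℂ := fun m => ∑ b, y b * ch p (-(m * b)) with hF
  have key : ∑ m, ev m v * ((starRingEnd ℂ) (F m) * F m)
      = (p : ℂ) * (star y ⬝ᵥ circulant v *ᵥ y) := by
    have expand : ∀ m : ZMod p, ev m v * ((starRingEnd ℂ) (F m) * F m)
        = ∑ a, ∑ b, (starRingEnd ℂ) (y a) * y b * (ev m v * ch p (m * (a - b))) := by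
      intro m
      have hcF : (starRingEnd ℂ) (F m) = ∑ a, (starRingEnd ℂ) (y a) * ch p (m * a) := by
        rw [hF, map_sum]
        refine Finset.sum_congr rfl fun a _ => ?_
        rw [_root_.map_mul, ch_conj, neg_neg]
      rw [hcF, hF, Finset.sum_mul_sum, Finset.mul_sum]
      refine Finset.sum_congr rfl fun a _ => ?_
      rw [Finset.mul_sum]
      refine Finset.sum_congr rfl fun b _ => ?_
      have harg : m * (a - b) = m * a + -(m * b) := by ring
      rw [harg, ch_add]
      ring
    rw [Finset.sum_congr rfl fun m _ => expand m, Finset.sum_comm, hq, Finset.mul_sum]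
    refine Finset.sum_congr rfl fun a _ => ?_
    rw [Finset.sum_comm, Finset.mul_sum]
    refine Finset.sum_congr rfl fun b _ => ?_
    rw [← Finset.mul_sum, inv_formula v (a - b)]
    ring
  have hp : (p : ℂ) ≠ 0 := Nat.cast_ne_zero.mpr (NeZero.ne p)
  have hq2 : star y ⬝ᵥ circulant v *ᵥ y
      = (p : ℂ)⁻¹ * ∑ m, ev m v * ((starRingEnd ℂ) (F m) * F m) := by
    rw [key, ← mul_assoc, inv_mul_cancel₀ hp, one_mul]
  rw [hq2]
  refine mul_nonneg (nat_inv_nonneg p) (Finset.sum_nonneg fun m _ => mul_nonneg (h m) ?_)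
  rw [← Complex.star_def]
  exact star_mul_self_nonneg _

lemma pow_entry_posSemidef {N : Type*} [Fintype N] [DecidableEq N]
    {Λ : Matrix N N ℂ} (h : Λ.PosSemidef) (s : ℕ) :
    (Matrix.of fun i j => Λ i j ^ s).PosSemidef := by
  obtain ⟨B, hB⟩ := (by open scoped MatrixOrder in exact CStarAlgebra.nonneg_iff_eq_star_mul_self.mp h.nonneg :
    ∃ B : Matrix N N ℂ, Λ = Bᴴ * B)
  subst hB
  have hEq : (Matrix.of fun i j => (Bᴴ * B) i j ^ s)
      = (Matrix.of fun (f : Fin s → N) (j : N) => ∏ t, B (f t) j)ᴴ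
        * (Matrix.of fun (f : Fin s → N) (j : N) => ∏ t, B (f t) j) := by
    ext i j
    simp only [Matrix.mul_apply, Matrix.conjTranspose_apply, Matrix.of_apply]
    calc (∑ x, star (B x i) * B x j) ^ s
        = ∏ _t : Fin s, ∑ x, star (B x i) * B x j := by
          rw [Finset.prod_const, Finset.card_univ, Fintype.card_fin]
      _ = ∑ f ∈ Fintype.piFinset (fun _ : Fin s => Finset.univ),
            ∏ t, star (B (f t) i) * B (f t) j :=
          Finset.prod_univ_sum _ _
      _ = ∑ f : Fin s → N, star (∏ t, B (f t) i) * ∏ t, B (f t) j := by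
          rw [Fintype.piFinset_univ]
          refine Finset.sum_congr rfl fun f _ => ?_
          rw [star_prod, Finset.prod_mul_distrib]
  rw [hEq]
  exact Matrix.posSemidef_conjTranspose_mul_self _

lemma term_entry (u0 : ZMod p → ℂ) (a b : ℂ) (m : ZMod p) :
    (((circulant fun t => a * ch p (m * t))ᴴ * circulant u0)
        * circulant fun t => b * ch p (m * t)) 0 0
      = (starRingEnd ℂ) a * b * ((p : ℂ) * ev m u0) := by
  have h1 : ∀ a' : ZMod p, star (a * ch p (m * a')) = (starRingEnd ℂ) a * ch p (-(m * a')) := by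
    intro a'; rw [Complex.star_def, _root_.map_mul, ch_conj]
  calc (((circulant fun t => a * ch p (m * t))ᴴ * circulant u0)
        * circulant fun t => b * ch p (m * t)) 0 0
      = ∑ b', (∑ a', star (a * ch p (m * (a' - (0:ZMod p)))) * u0 (a' - b'))
          * (b * ch p (m * (b' - (0:ZMod p)))) := by
        simp only [Matrix.mul_apply, Matrix.conjTranspose_apply, Matrix.circulant_apply]
    _ = ∑ b', ∑ a', ((starRingEnd ℂ) a * b)
          * (ch p (-(m * a')) * (u0 (a' - b') * ch p (m * b'))) := by
        refine Finset.sum_congr rfl fun b' _ => ?_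
        rw [Finset.sum_mul]
        refine Finset.sum_congr rfl fun a' _ => ?_
        rw [sub_zero, sub_zero, h1]
        ring
    _ = ∑ _b' : ZMod p, ((starRingEnd ℂ) a * b) * ev m u0 := by
        refine Finset.sum_congr rfl fun b' _ => ?_
        rw [← Finset.mul_sum]
        congr 1
        have hb : ch p (-(m * b')) * ch p (m * b') = 1 := by
          rw [← ch_add, neg_add_cancel, ch_zero]
        refine (Fintype.sum_equiv (Equiv.addRight b')
          (fun t => u0 t * ch p (-(m * t)))
          (fun a' => ch p (-(m * a')) * (u0 (a' - b') * ch p (m * b'))) ?_).symm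
        intro t
        have harg : -(m * (t + b')) = -(m * t) + -(m * b') := by ring
        simp only [Equiv.coe_addRight, add_sub_cancel_right, harg, ch_add]
        linear_combination (-(u0 t * ch p (-(m * t)))) * hb
    _ = (starRingEnd ℂ) a * b * ((p : ℂ) * ev m u0) := by
        rw [Finset.sum_const, Finset.card_univ, ZMod.card, nsmul_eq_mul]
        ring

end PowPDAux

open PowPDAux

/-- **Key lemma in the proof of Proposition 9**: if `k` is a circulant-matrix-valued kernel
that is positive definite with circulant coefficients, then for every integer `s ≥ 1` the
kernel `(x,y) ↦ k(x,y)^s` is again positive definite with circulant coefficients. -/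
theorem pow_isPDKernelCirc (p : ℕ) [NeZero p] {X : Type*}
    (k : X → X → Matrix (ZMod p) (ZMod p) ℂ)
    (hcirc : ∀ x y, IsCirculantMat p (k x y))
    (hpd : IsPDKernelCirc p k)
    (s : ℕ) (hs : 1 ≤ s) :
    IsPDKernelCirc p (fun x y => k x y ^ s) := by
  intro n x c hc
  classical
  set u : Fin n → Fin n → ZMod p → ℂ := fun i j t => k (x i) (x j) 0 (-t) with hu
  have hk : ∀ i j : Fin n, k (x i) (x j) = circulant (u i j) :=
    fun i j => circ_of_isCirc _ (hcirc _ _)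
  set v : Fin n → ZMod p → ℂ := fun i t => c i 0 (-t) with hv
  have hcv : ∀ i, c i = circulant (v i) := fun i => circ_of_isCirc _ (hc i)
  -- Step 1 : the mode Gram matrices are PSD
  have key : ∀ m : ZMod p,
      (Matrix.of fun i j : Fin n => (p : ℂ) * ev m (u i j)).PosSemidef := by
    intro m
    apply posSemidef_of_forall
    intro wv
    set c' : Fin n → Matrix (ZMod p) (ZMod p) ℂ :=
      fun i => circulant (fun t => wv i * ch p (m * t)) with hc'
    have hS := hpd n x c' (fun i => isCirc_circulant _)
    have h0 := hS.dotProduct_mulVec_nonneg (Pi.single 0 1)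
    rw [dot_single] at h0
    have hterm : ∀ i j : Fin n, ((c' i)ᴴ * k (x i) (x j) * c' j) 0 0
        = (starRingEnd ℂ) (wv i) * wv j * ((p : ℂ) * ev m (u i j)) := by
      intro i j
      rw [hc', hk i j]
      exact term_entry (u i j) (wv i) (wv j) m
    have hS00 : (∑ i : Fin n, ∑ j : Fin n, (c' i)ᴴ * k (x i) (x j) * c' j) 0 0
        = ∑ i : Fin n, ∑ j : Fin n,
            (starRingEnd ℂ) (wv i) * wv j * ((p : ℂ) * ev m (u i j)) := by
      rw [Matrix.sum_apply]
      refine Finset.sum_congr rfl fun i _ => ?_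
      rw [Matrix.sum_apply]
      exact Finset.sum_congr rfl fun j _ => hterm i j
    have hform : star wv ⬝ᵥ (Matrix.of fun i j : Fin n => (p : ℂ) * ev m (u i j)) *ᵥ wv
        = ∑ i : Fin n, ∑ j : Fin n,
            (starRingEnd ℂ) (wv i) * wv j * ((p : ℂ) * ev m (u i j)) := by
      simp only [dotProduct, mulVec, Matrix.of_apply, Pi.star_apply, Complex.star_def,
        Finset.mul_sum]
      exact Finset.sum_congr rfl fun i _ => Finset.sum_congr rfl fun j _ => by ring
    rw [hform, ← hS00]
    exact h0
  -- Step 2 : write the powers as circulants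
  choose w hw hwev using fun i j : Fin n => pow_circulant (u i j) s
  -- Step 3 : rewrite the Gram sum as one circulant
  set vstar : Fin n → ZMod p → ℂ := fun i t => star (v i (-t)) with hvstar
  set V : Fin n → Fin n → ZMod p → ℂ :=
    fun i j => circulant (circulant (vstar i) *ᵥ w i j) *ᵥ v j with hV
  have hrw : (∑ i : Fin n, ∑ j : Fin n, (c i)ᴴ * (k (x i) (x j)) ^ s * c j)
      = circulant (fun t => ∑ i : Fin n, ∑ j : Fin n, V i j t) := by
    have hterm : ∀ i j : Fin n,
        (c i)ᴴ * (k (x i) (x j)) ^ s * c j = circulant (V i j) := by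
      intro i j
      rw [hcv i, hcv j, hk i j, hw i j, conjTranspose_circulant,
        circulant_mul, circulant_mul]
      rfl
    calc (∑ i : Fin n, ∑ j : Fin n, (c i)ᴴ * (k (x i) (x j)) ^ s * c j)
        = ∑ i : Fin n, ∑ j : Fin n, circulant (V i j) := by
          exact Finset.sum_congr rfl fun i _ => Finset.sum_congr rfl fun j _ => hterm i j
      _ = ∑ i : Fin n, circulant (fun t => ∑ j : Fin n, V i j t) :=
          Finset.sum_congr rfl fun i _ => circulant_sum _ _
      _ = circulant (fun t => ∑ i : Fin n, ∑ j : Fin n, V i j t) := circulant_sum _ _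
  -- Step 4 : positivity of each Fourier mode of the big circulant
  have hpos : ∀ m : ZMod p,
      0 ≤ ev m (fun t => ∑ i : Fin n, ∑ j : Fin n, V i j t) := by
    intro m
    set a : Fin n → ℂ := fun i => ev m (v i) with ha
    have hVev : ∀ i j : Fin n, ev m (V i j)
        = (starRingEnd ℂ) (a i) * (ev m (u i j)) ^ s * a j := by
      intro i j
      rw [hV]
      rw [ev_conv, ev_conv]
      have : ev m (vstar i) = (starRingEnd ℂ) (ev m (v i)) := by
        rw [hvstar]
        exact ev_star m (v i)
      rw [this, hwev i j]
    have hsum : ev m (fun t => ∑ i : Fin n, ∑ j : Fin n, V i j t)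
        = ∑ i : Fin n, ∑ j : Fin n,
            (starRingEnd ℂ) (a i) * (ev m (u i j)) ^ s * a j := by
      rw [ev_sum]
      refine Finset.sum_congr rfl fun i _ => ?_
      rw [ev_sum]
      exact Finset.sum_congr rfl fun j _ => hVev i j
    have hPSD := pow_entry_posSemidef (key m) s
    have h0 := hPSD.dotProduct_mulVec_nonneg a
    simp only [Matrix.of_apply] at h0
    have hform : star a ⬝ᵥ (Matrix.of fun i j : Fin n => ((p : ℂ) * ev m (u i j)) ^ s) *ᵥ a
        = (p : ℂ) ^ s * ∑ i : Fin n, ∑ j : Fin n,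
            (starRingEnd ℂ) (a i) * (ev m (u i j)) ^ s * a j := by
      simp only [dotProduct, mulVec, Matrix.of_apply, Pi.star_apply, Complex.star_def,
        Finset.mul_sum]
      refine Finset.sum_congr rfl fun i _ => ?_
      refine Finset.sum_congr rfl fun j _ => ?_
      rw [mul_pow]
      ring
    rw [hform] at h0
    have hinv : (0:ℂ) ≤ ((p : ℂ) ^ s)⁻¹ := by
      have : ((p : ℂ) ^ s)⁻¹ = (((p ^ s : ℕ) : ℂ))⁻¹ := by push_cast; ring_nf
      rw [this]
      exact nat_inv_nonneg _
    have hps : ((p : ℂ) ^ s) ≠ 0 :=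
      pow_ne_zero _ (Nat.cast_ne_zero.mpr (NeZero.ne p))
    have := mul_nonneg hinv h0
    rw [← mul_assoc, inv_mul_cancel₀ hps, one_mul] at this
    rw [hsum]
    exact this
  -- conclude
  show (∑ i : Fin n, ∑ j : Fin n, (c i)ᴴ * (k (x i) (x j)) ^ s * c j).PosSemidef
  rw [hrw]
  exact circulant_posSemidef _ hpos
end

section
/- Fix L ∈ ℕ, circulant matrices a_1, …, a_L, b_1, …, b_L ∈ ℂ^{p×p}, and for each j = 1, …, L a polynomial σ_j(x) = Σ_{l=1}^{m_j} α_{j,l}·x^l with real coefficients α_{j,l} ≥ 0 and no constant term, applied to matrices via matrix powers. Let X be a set of circulant p×p matrices, and define k̂ : X × X → ℂ^{p×p} recursively by h_1(x,y) = σ_1(b_1ᴴ·b_1 + xᴴ·a_1ᴴ·a_1·y) and h_j(x,y) = σ_j(b_jᴴ·b_j + h_{j−1}(x,y)·a_jᴴ·a_j) for j = 2, …, L, with k̂ = h_L. Then k̂ takes circulant values, k̂(x,y)ᴴ = k̂(y,x) for all x, y, and for all n ∈ ℕ, all x_1, …, x_n ∈ X, and all circulant c_1, …, c_n ∈ ℂ^{p×p},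 the matrix Σ_{i,j=1}^n c_iᴴ · k̂(x_i, x_j) · c_j is positive semidefinite. (Proposition 9: the CNN-type kernel is a C*(ℤ/pℤ)-valued positive definite kernel.) -/
open Matrix
open scoped BigOperators ComplexOrder

/-- The polynomial `σ(x) = Σ_{l=1}^{m} α_l·x^l` (no constant term, real coefficients)
applied to a matrix via matrix powers. -/
noncomputable def polyApply (p : ℕ) [NeZero p] (m : ℕ) (α : ℕ → ℝ)
    (x : Matrix (ZMod p) (ZMod p) ℂ) : Matrix (ZMod p) (ZMod p) ℂ :=
  ∑ l ∈ Finset.Icc 1 m, α l • x ^ l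

/-- The recursively defined CNN-type kernel: `h_1(x,y) = σ_1(b_1ᴴ·b_1 + xᴴ·a_1ᴴ·a_1·y)` and
`h_{j+1}(x,y) = σ_{j+1}(b_{j+1}ᴴ·b_{j+1} + h_j(x,y)·a_{j+1}ᴴ·a_{j+1})` (indices here are
0-based: layer `j` of the paper corresponds to index `j - 1`). -/
noncomputable def cnnKernelSeq (p : ℕ) [NeZero p]
    (a b : ℕ → Matrix (ZMod p) (ZMod p) ℂ) (m : ℕ → ℕ) (α : ℕ → ℕ → ℝ)
    (x y : Matrix (ZMod p) (ZMod p) ℂ) : ℕ → Matrix (ZMod p) (ZMod p) ℂ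
  | 0 => polyApply p (m 0) (α 0) ((b 0)ᴴ * b 0 + xᴴ * (a 0)ᴴ * a 0 * y)
  | (j + 1) => polyApply p (m (j + 1)) (α (j + 1))
      ((b (j + 1))ᴴ * b (j + 1) + cnnKernelSeq p a b m α x y j * ((a (j + 1))ᴴ * a (j + 1)))

namespace CnnAux


variable {p : ℕ} [NeZero p]

lemma circ_add {M N : Matrix (ZMod p) (ZMod p) ℂ} (hM : IsCirculantMat p M)
    (hN : IsCirculantMat p N) : IsCirculantMat p (M + N) := fun i j => by
  simp [Matrix.add_apply, hM i j, hN i j]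

lemma circ_smul (r : ℝ) {M : Matrix (ZMod p) (ZMod p) ℂ} (hM : IsCirculantMat p M) :
    IsCirculantMat p (r • M) := fun i j => by
  simp [Matrix.smul_apply, hM i j]

lemma circ_mul {M N : Matrix (ZMod p) (ZMod p) ℂ} (hM : IsCirculantMat p M)
    (hN : IsCirculantMat p N) : IsCirculantMat p (M * N) := by
  intro i j
  simp only [Matrix.mul_apply]
  refine Fintype.sum_equiv (Equiv.subRight i) _ _ fun k => ?_
  simp only [Equiv.subRight_apply]
  rw [hM i k, hN k j, hN (k - i) (j - i), sub_sub_sub_cancel_right]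

lemma circ_conjTranspose {M : Matrix (ZMod p) (ZMod p) ℂ} (hM : IsCirculantMat p M) :
    IsCirculantMat p Mᴴ := fun i j => by
  simp only [Matrix.conjTranspose_apply]
  rw [hM j i, hM (j - i) 0, zero_sub, neg_sub]

lemma circ_one : IsCirculantMat p (1 : Matrix (ZMod p) (ZMod p) ℂ) := fun i j => by
  simp [Matrix.one_apply, sub_eq_zero, eq_comm]

lemma circ_pow {M : Matrix (ZMod p) (ZMod p) ℂ} (hM : IsCirculantMat p M) (l : ℕ) :
    IsCirculantMat p (M ^ l) := by
  induction l with
  | zero => simpa using circ_one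
  | succ l ih => rw [pow_succ]; exact circ_mul ih hM

lemma circ_sum {ι : Type*} (s : Finset ι) (f : ι → Matrix (ZMod p) (ZMod p) ℂ)
    (h : ∀ i ∈ s, IsCirculantMat p (f i)) : IsCirculantMat p (∑ i ∈ s, f i) := fun i j => by
  rw [Matrix.sum_apply, Matrix.sum_apply]
  exact Finset.sum_congr rfl fun l hl => h l hl i j

lemma circ_mul_comm {M N : Matrix (ZMod p) (ZMod p) ℂ} (hM : IsCirculantMat p M)
    (hN : IsCirculantMat p N) : M * N = N * M := by
  ext i j
  simp only [Matrix.mul_apply]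
  refine Fintype.sum_equiv (Equiv.subLeft (i + j)) _ _ fun k => ?_
  simp only [Equiv.subLeft_apply]
  rw [hM i k, hN k j, hN i (i + j - k), hM (i + j - k) j]
  have h1 : i + j - k - i = j - k := by ring
  have h2 : j - (i + j - k) = k - i := by ring
  rw [h1, h2, mul_comm]

/-- The Fourier symbol of a matrix at frequency `k`. -/
noncomputable def phi (k : ZMod p) (M : Matrix (ZMod p) (ZMod p) ℂ) : ℂ :=
  ∑ t, M 0 t * ZMod.stdAddChar (k * t)

lemma conj_std (x : ZMod p) :
    (starRingEnd ℂ) (ZMod.stdAddChar x) = ZMod.stdAddChar (-x) := by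
  rw [ZMod.stdAddChar_apply, ZMod.stdAddChar_apply, AddChar.map_neg_eq_inv,
    ← Circle.coe_inv_eq_conj]

lemma phi_add (k : ZMod p) (M N : Matrix (ZMod p) (ZMod p) ℂ) :
    phi k (M + N) = phi k M + phi k N := by
  simp [phi, add_mul, Finset.sum_add_distrib]

lemma phi_smul (k : ZMod p) (r : ℝ) (M : Matrix (ZMod p) (ZMod p) ℂ) :
    phi k (r • M) = (r : ℂ) * phi k M := by
  simp [phi, Matrix.smul_apply, Complex.real_smul, Finset.mul_sum, mul_assoc]

lemma phi_sum (k : ZMod p) {ι : Type*} (s : Finset ι) (f : ι → Matrix (ZMod p) (ZMod p) ℂ) :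
    phi k (∑ i ∈ s, f i) = ∑ i ∈ s, phi k (f i) := by
  simp only [phi, Matrix.sum_apply, Finset.sum_mul]
  rw [Finset.sum_comm]

lemma phi_mul (k : ZMod p) {M N : Matrix (ZMod p) (ZMod p) ℂ} (hN : IsCirculantMat p N) :
    phi k (M * N) = phi k M * phi k N := by
  unfold phi
  rw [Finset.sum_mul_sum]
  simp only [Matrix.mul_apply, Finset.sum_mul]
  rw [Finset.sum_comm]
  refine Finset.sum_congr rfl fun s _ => ?_
  refine Fintype.sum_equiv (Equiv.subRight s) _ _ fun t => ?_
  simp only [Equiv.subRight_apply]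
  rw [hN s t]
  have : ZMod.stdAddChar (k * s) * ZMod.stdAddChar (k * (t - s)) = ZMod.stdAddChar (k * t) := by
    rw [← AddChar.map_add_eq_mul]
    congr 1
    ring
  rw [← this]
  ring

lemma phi_conjTranspose (k : ZMod p) {M : Matrix (ZMod p) (ZMod p) ℂ}
    (hM : IsCirculantMat p M) : phi k Mᴴ = (starRingEnd ℂ) (phi k M) := by
  unfold phi
  rw [map_sum]
  refine Fintype.sum_equiv (Equiv.neg _) _ _ fun t => ?_
  simp only [Equiv.neg_apply, Matrix.conjTranspose_apply]
  rw [hM t 0, zero_sub, map_mul (starRingEnd ℂ), conj_std, Complex.star_def]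
  congr 2
  ring

lemma phi_pow (k : ZMod p) {M : Matrix (ZMod p) (ZMod p) ℂ} (hM : IsCirculantMat p M) (l : ℕ) :
    phi k (M ^ l) = phi k M ^ l := by
  induction l with
  | zero =>
      simp only [pow_zero]
      unfold phi
      simp [Matrix.one_apply, ZMod.stdAddChar]
  | succ l ih => rw [pow_succ, phi_mul k hM, ih, pow_succ]

end CnnAux

namespace CnnAux

variable {p : ℕ} [NeZero p]

lemma circ_inv {S : Matrix (ZMod p) (ZMod p) ℂ} (hS : IsCirculantMat p S) (i j : ZMod p) :
    S i j = (p : ℂ)⁻¹ * ∑ k, phi k S * ZMod.stdAddChar (k * i) *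
      (starRingEnd ℂ) (ZMod.stdAddChar (k * j)) := by
  have key : ∑ k : ZMod p, phi k S * ZMod.stdAddChar (k * i) *
      (starRingEnd ℂ) (ZMod.stdAddChar (k * j)) = (p : ℂ) * S 0 (j - i) := by
    simp only [phi, Finset.sum_mul, conj_std]
    rw [Finset.sum_comm]
    have step1 : ∀ t : ZMod p, (∑ k : ZMod p, S 0 t * ZMod.stdAddChar (k * t) *
        ZMod.stdAddChar (k * i) * ZMod.stdAddChar (-(k * j)))
        = S 0 t * ∑ k : ZMod p, ZMod.stdAddChar (k * (t + i - j)) := by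
      intro t
      rw [Finset.mul_sum]
      refine Finset.sum_congr rfl fun k _ => ?_
      have : ZMod.stdAddChar (k * t) * ZMod.stdAddChar (k * i) * ZMod.stdAddChar (-(k * j))
          = ZMod.stdAddChar (k * (t + i - j)) := by
        rw [← AddChar.map_add_eq_mul, ← AddChar.map_add_eq_mul]
        congr 1
        ring
      rw [← this]
      ring
    calc (∑ t : ZMod p, ∑ k : ZMod p, S 0 t * ZMod.stdAddChar (k * t) *
            ZMod.stdAddChar (k * i) * ZMod.stdAddChar (-(k * j)))
        = ∑ t : ZMod p, S 0 t * ∑ k : ZMod p, ZMod.stdAddChar (k * (t + i - j)) := by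
          exact Finset.sum_congr rfl fun t _ => step1 t
      _ = ∑ t : ZMod p, (if t = j - i then S 0 t * (p : ℂ) else 0) := by
          refine Finset.sum_congr rfl fun t _ => ?_
          rw [AddChar.sum_mulShift _ (ZMod.isPrimitive_stdAddChar p)]
          have hcond : (t + i - j = 0) ↔ (t = j - i) := by
            constructor
            · intro h; have := sub_eq_zero.mp h; linear_combination this
            · intro h; rw [h]; ring
          simp only [ZMod.card]
          split_ifs with h1 h2 h2
          · rfl
          · exact absurd (hcond.mp h1) h2
          · exact absurd (hcond.mpr h2) h1
          · simp
      _ = S 0 (j - i) * (p : ℂ) := by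
          rw [Finset.sum_ite_eq' Finset.univ (j - i) (fun t => S 0 t * (p : ℂ))]
          simp
      _ = (p : ℂ) * S 0 (j - i) := mul_comm _ _
  rw [key, hS i j]
  have hp : (p : ℂ) ≠ 0 := Nat.cast_ne_zero.mpr (NeZero.ne p)
  field_simp

lemma psd_of_phi {S : Matrix (ZMod p) (ZMod p) ℂ} (hS : IsCirculantMat p S)
    (hH : S.IsHermitian) (hphi : ∀ k, 0 ≤ phi k S) : S.PosSemidef := by
  refine .of_dotProduct_mulVec_nonneg hH fun v => ?_
  set w : ZMod p → ℂ := fun k => ∑ j, (starRingEnd ℂ) (ZMod.stdAddChar (k * j)) * v j with hw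
  have key : star v ⬝ᵥ (S *ᵥ v) =
      ∑ k, (p : ℂ)⁻¹ * (phi k S * (star (w k) * w k)) := by
    have lhs_eq : star v ⬝ᵥ (S *ᵥ v) = ∑ i, ∑ j, star (v i) * S i j * v j := by
      simp only [dotProduct, mulVec, Pi.star_apply, Finset.mul_sum]
      exact Finset.sum_congr rfl fun i _ => Finset.sum_congr rfl fun j _ => by ring
    have expand1 : ∀ i j : ZMod p, star (v i) * S i j * v j = ∑ k : ZMod p,
        (p : ℂ)⁻¹ * phi k S * (star (v i) * ZMod.stdAddChar (k * i)) *
          ((starRingEnd ℂ) (ZMod.stdAddChar (k * j)) * v j) := by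
      intro i j
      rw [circ_inv hS i j]
      rw [show star (v i) * ((p:ℂ)⁻¹ * ∑ k, phi k S * ZMod.stdAddChar (k * i) *
          (starRingEnd ℂ) (ZMod.stdAddChar (k * j))) * v j
          = (p:ℂ)⁻¹ * ((∑ k, phi k S * ZMod.stdAddChar (k * i) *
            (starRingEnd ℂ) (ZMod.stdAddChar (k * j))) * (star (v i) * v j)) from by ring]
      rw [Finset.sum_mul, Finset.mul_sum]
      exact Finset.sum_congr rfl fun k _ => by ring
    have star_w : ∀ k, star (w k) = ∑ i, star (v i) * ZMod.stdAddChar (k * i) := by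
      intro k
      rw [hw]
      simp only [star_sum, star_mul', starRingEnd_apply, star_star]
      exact Finset.sum_congr rfl fun i _ => mul_comm _ _
    calc star v ⬝ᵥ (S *ᵥ v) = ∑ i, ∑ j, star (v i) * S i j * v j := lhs_eq
      _ = ∑ i, ∑ j, ∑ k : ZMod p,
          (p : ℂ)⁻¹ * phi k S * (star (v i) * ZMod.stdAddChar (k * i)) *
            ((starRingEnd ℂ) (ZMod.stdAddChar (k * j)) * v j) := by
          exact Finset.sum_congr rfl fun i _ => Finset.sum_congr rfl fun j _ => expand1 i j
      _ = ∑ k : ZMod p, ∑ i, ∑ j,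
          (p : ℂ)⁻¹ * phi k S * (star (v i) * ZMod.stdAddChar (k * i)) *
            ((starRingEnd ℂ) (ZMod.stdAddChar (k * j)) * v j) := by
          rw [show (∑ i : ZMod p, ∑ j : ZMod p, ∑ k : ZMod p,
              (p : ℂ)⁻¹ * phi k S * (star (v i) * ZMod.stdAddChar (k * i)) *
                ((starRingEnd ℂ) (ZMod.stdAddChar (k * j)) * v j))
              = ∑ i : ZMod p, ∑ k : ZMod p, ∑ j : ZMod p,
              (p : ℂ)⁻¹ * phi k S * (star (v i) * ZMod.stdAddChar (k * i)) *
                ((starRingEnd ℂ) (ZMod.stdAddChar (k * j)) * v j) from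
            Finset.sum_congr rfl fun i _ => Finset.sum_comm]
          exact Finset.sum_comm
      _ = ∑ k, (p : ℂ)⁻¹ * (phi k S * (star (w k) * w k)) := by
          refine Finset.sum_congr rfl fun k _ => ?_
          rw [star_w k]
          simp only [hw]
          rw [Finset.sum_mul_sum, Finset.mul_sum, Finset.mul_sum]
          refine Finset.sum_congr rfl fun i _ => ?_
          rw [Finset.mul_sum, Finset.mul_sum]
          refine Finset.sum_congr rfl fun j _ => ?_
          ring
  rw [key]
  refine Finset.sum_nonneg fun k _ => ?_
  have h1 : (0:ℂ) ≤ (p : ℂ)⁻¹ := by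
    rw [show ((p:ℂ))⁻¹ = (((p:ℝ)⁻¹ : ℝ) : ℂ) by push_cast; ring]
    rw [Complex.zero_le_real]
    positivity
  exact mul_nonneg h1 (mul_nonneg (hphi k) (star_mul_self_nonneg _))

end CnnAux

namespace CnnAux

/-- A scalar kernel on `Fin n` admitting a Gram representation. -/
def GramKer (n : ℕ) (G : Fin n → Fin n → ℂ) : Prop :=
  ∃ (ι : Type) (_ : Fintype ι) (f : ι → Fin n → ℂ),
    ∀ i j, G i j = ∑ s, star (f s i) * f s j

lemma GramKer.congr {n : ℕ} {G G' : Fin n → Fin n → ℂ} (h : GramKer n G)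
    (he : ∀ i j, G i j = G' i j) : GramKer n G' := by
  obtain ⟨ι, _, f, hf⟩ := h
  exact ⟨ι, ‹_›, f, fun i j => (he i j) ▸ hf i j⟩

lemma gram_star_mul {n : ℕ} (g : Fin n → ℂ) : GramKer n (fun i j => star (g i) * g j) :=
  ⟨Unit, inferInstance, fun _ => g, fun i j => by simp⟩

lemma gram_zero {n : ℕ} : GramKer n (fun _ _ => 0) :=
  ⟨Unit, inferInstance, fun _ _ => 0, fun i j => by simp⟩

lemma gram_add {n : ℕ} {G₁ G₂ : Fin n → Fin n → ℂ} (h₁ : GramKer n G₁) (h₂ : GramKer n G₂) :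
    GramKer n (fun i j => G₁ i j + G₂ i j) := by
  obtain ⟨ι₁, _, f₁, hf₁⟩ := h₁
  obtain ⟨ι₂, _, f₂, hf₂⟩ := h₂
  refine ⟨ι₁ ⊕ ι₂, inferInstance, Sum.elim f₁ f₂, fun i j => ?_⟩
  rw [Fintype.sum_sum_type]
  simp [hf₁, hf₂]

lemma gram_mul {n : ℕ} {G₁ G₂ : Fin n → Fin n → ℂ} (h₁ : GramKer n G₁) (h₂ : GramKer n G₂) :
    GramKer n (fun i j => G₁ i j * G₂ i j) := by
  obtain ⟨ι₁, _, f₁, hf₁⟩ := h₁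
  obtain ⟨ι₂, _, f₂, hf₂⟩ := h₂
  refine ⟨ι₁ × ι₂, inferInstance, fun s i => f₁ s.1 i * f₂ s.2 i, fun i j => ?_⟩
  show G₁ i j * G₂ i j = _
  rw [hf₁, hf₂, Finset.sum_mul_sum, Fintype.sum_prod_type]
  exact Finset.sum_congr rfl fun s _ => Finset.sum_congr rfl fun t _ => by
    rw [star_mul']
    ring

lemma gram_const {n : ℕ} (r : ℝ) (hr : 0 ≤ r) : GramKer n (fun _ _ => (r : ℂ)) := by
  refine ⟨Unit, inferInstance, fun _ _ => (Real.sqrt r : ℂ), fun i j => ?_⟩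
  simp only [Finset.univ_unique, Finset.sum_const, Finset.card_singleton, one_smul]
  rw [Complex.star_def, Complex.conj_ofReal, ← Complex.ofReal_mul,
    Real.mul_self_sqrt hr]

lemma gram_smul {n : ℕ} (r : ℝ) (hr : 0 ≤ r) {G : Fin n → Fin n → ℂ} (h : GramKer n G) :
    GramKer n (fun i j => (r : ℂ) * G i j) :=
  gram_mul (gram_const r hr) h

lemma gram_pow {n : ℕ} {G : Fin n → Fin n → ℂ} (h : GramKer n G) (l : ℕ) :
    GramKer n (fun i j => G i j ^ l) := by
  induction l with
  | zero => exact (gram_const 1 zero_le_one).congr (by simp)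
  | succ l ih => exact (gram_mul ih h).congr (fun i j => by rw [pow_succ])

lemma gram_sum {n : ℕ} {ι : Type*} (s : Finset ι) (F : ι → Fin n → Fin n → ℂ)
    (h : ∀ l ∈ s, GramKer n (F l)) :
    GramKer n (fun i j => ∑ l ∈ s, F l i j) := by
  classical
  induction s using Finset.induction_on with
  | empty => exact gram_zero.congr (by simp)
  | insert _ _ hnot ih =>
      rename_i a s
      refine (gram_add (h a (Finset.mem_insert_self a s))
        (ih fun l hl => h l (Finset.mem_insert_of_mem hl))).congr fun i j => ?_
      rw [Finset.sum_insert hnot]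

lemma gram_poly {n : ℕ} (mm : ℕ) (αf : ℕ → ℝ) (hα : ∀ l, 0 ≤ αf l)
    {G : Fin n → Fin n → ℂ} (h : GramKer n G) :
    GramKer n (fun i j => ∑ l ∈ Finset.Icc 1 mm, (αf l : ℂ) * G i j ^ l) :=
  gram_sum _ _ fun l _ => gram_smul (αf l) (hα l) (gram_pow h l)

lemma gram_nonneg {n : ℕ} {G : Fin n → Fin n → ℂ} (hG : GramKer n G) (v : Fin n → ℂ) :
    0 ≤ ∑ i, ∑ j, star (v i) * G i j * v j := by
  obtain ⟨ι, _, f, hf⟩ := hG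
  have expand : ∀ i j, star (v i) * G i j * v j
      = ∑ s, (star (v i) * star (f s i)) * (f s j * v j) := by
    intro i j
    rw [hf, Finset.mul_sum, Finset.sum_mul]
    exact Finset.sum_congr rfl fun s _ => by ring
  have swap : (∑ i, ∑ j, star (v i) * G i j * v j)
      = ∑ s, (∑ i, star (v i) * star (f s i)) * (∑ j, f s j * v j) := by
    simp_rw [expand]
    rw [show (∑ i, ∑ j, ∑ s, (star (v i) * star (f s i)) * (f s j * v j))
        = ∑ i, ∑ s, ∑ j, (star (v i) * star (f s i)) * (f s j * v j) from
      Finset.sum_congr rfl fun i _ => Finset.sum_comm]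
    rw [show (∑ i, ∑ s, ∑ j, (star (v i) * star (f s i)) * (f s j * v j))
        = ∑ s, ∑ i, ∑ j, (star (v i) * star (f s i)) * (f s j * v j) from Finset.sum_comm]
    refine Finset.sum_congr rfl fun s _ => ?_
    rw [Finset.sum_mul_sum]
  rw [swap]
  refine Finset.sum_nonneg fun s _ => ?_
  have hz : (∑ i, star (v i) * star (f s i)) = star (∑ j, f s j * v j) := by
    rw [star_sum]
    exact Finset.sum_congr rfl fun i _ => by rw [star_mul']; ring
  rw [hz]
  exact star_mul_self_nonneg _

end CnnAux

namespace CnnAux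

variable {p : ℕ} [NeZero p]

lemma circ_polyApply (mm : ℕ) (αf : ℕ → ℝ) {M : Matrix (ZMod p) (ZMod p) ℂ}
    (hM : IsCirculantMat p M) : IsCirculantMat p (polyApply p mm αf M) :=
  circ_sum _ _ fun l _ => circ_smul (αf l) (circ_pow hM l)

lemma phi_polyApply (k : ZMod p) (mm : ℕ) (αf : ℕ → ℝ) {M : Matrix (ZMod p) (ZMod p) ℂ}
    (hM : IsCirculantMat p M) :
    phi k (polyApply p mm αf M) = ∑ l ∈ Finset.Icc 1 mm, (αf l : ℂ) * phi k M ^ l := by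
  unfold polyApply
  rw [phi_sum]
  exact Finset.sum_congr rfl fun l _ => by rw [phi_smul, phi_pow k hM]

lemma conjTranspose_polyApply (mm : ℕ) (αf : ℕ → ℝ) (M : Matrix (ZMod p) (ZMod p) ℂ) :
    (polyApply p mm αf M)ᴴ = polyApply p mm αf Mᴴ := by
  unfold polyApply
  rw [Matrix.conjTranspose_sum]
  exact Finset.sum_congr rfl fun l _ => by
    rw [Matrix.conjTranspose_smul, Matrix.conjTranspose_pow, star_trivial]

section main

variable (a b : ℕ → Matrix (ZMod p) (ZMod p) ℂ) (m : ℕ → ℕ) (α : ℕ → ℕ → ℝ)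
variable (ha : ∀ j, IsCirculantMat p (a j)) (hb : ∀ j, IsCirculantMat p (b j))

include ha hb in
lemma circ_cnn {x y : Matrix (ZMod p) (ZMod p) ℂ} (hx : IsCirculantMat p x)
    (hy : IsCirculantMat p y) (J : ℕ) :
    IsCirculantMat p (cnnKernelSeq p a b m α x y J) := by
  induction J with
  | zero =>
      exact circ_polyApply _ _ (circ_add (circ_mul (circ_conjTranspose (hb 0)) (hb 0))
        (circ_mul (circ_mul (circ_mul (circ_conjTranspose hx) (circ_conjTranspose (ha 0)))
          (ha 0)) hy))
  | succ J ih =>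
      exact circ_polyApply _ _ (circ_add (circ_mul (circ_conjTranspose (hb (J+1))) (hb (J+1)))
        (circ_mul ih (circ_mul (circ_conjTranspose (ha (J+1))) (ha (J+1)))))

include ha hb in
lemma conj_cnn {x y : Matrix (ZMod p) (ZMod p) ℂ} (hx : IsCirculantMat p x)
    (hy : IsCirculantMat p y) (J : ℕ) :
    (cnnKernelSeq p a b m α x y J)ᴴ = cnnKernelSeq p a b m α y x J := by
  induction J with
  | zero =>
      show (polyApply p (m 0) (α 0) _)ᴴ = polyApply p (m 0) (α 0) _
      rw [conjTranspose_polyApply]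
      congr 1
      simp [Matrix.conjTranspose_add, Matrix.conjTranspose_mul, Matrix.mul_assoc]
  | succ J ih =>
      show (polyApply p (m (J+1)) (α (J+1)) _)ᴴ = polyApply p (m (J+1)) (α (J+1)) _
      rw [conjTranspose_polyApply]
      congr 1
      rw [Matrix.conjTranspose_add, Matrix.conjTranspose_mul, Matrix.conjTranspose_mul,
        Matrix.conjTranspose_mul, Matrix.conjTranspose_conjTranspose,
        Matrix.conjTranspose_conjTranspose, ih]
      exact congrArg _ (circ_mul_comm (circ_mul (circ_conjTranspose (ha (J+1)))
        (ha (J+1))) (circ_cnn a b m α ha hb hy hx J))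

include ha hb in
lemma gram_cnn (hα : ∀ j l, 0 ≤ α j l) (k : ZMod p) {n : ℕ}
    (xs : Fin n → Matrix (ZMod p) (ZMod p) ℂ) (hxs : ∀ i, IsCirculantMat p (xs i)) (J : ℕ) :
    GramKer n (fun i j => phi k (cnnKernelSeq p a b m α (xs i) (xs j) J)) := by
  induction J with
  | zero =>
      have hform : ∀ i j, phi k (cnnKernelSeq p a b m α (xs i) (xs j) 0)
          = ∑ l ∈ Finset.Icc 1 (m 0), ((α 0 l : ℂ)) *
            ((star (phi k (b 0)) * phi k (b 0)) +
              star (phi k (a 0) * phi k (xs i)) * (phi k (a 0) * phi k (xs j))) ^ l := by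
        intro i j
        show phi k (polyApply p (m 0) (α 0) _) = _
        rw [phi_polyApply k _ _ (circ_add (circ_mul (circ_conjTranspose (hb 0)) (hb 0))
          (circ_mul (circ_mul (circ_mul (circ_conjTranspose (hxs i))
            (circ_conjTranspose (ha 0))) (ha 0)) (hxs j)))]
        refine Finset.sum_congr rfl fun l _ => ?_
        congr 2
        rw [phi_add, phi_mul k (hb 0), phi_conjTranspose k (hb 0),
          phi_mul k (hxs j), phi_mul k (ha 0), phi_mul k (circ_conjTranspose (ha 0)),
          phi_conjTranspose k (ha 0), phi_conjTranspose k (hxs i)]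
        simp only [Complex.star_def, _root_.map_mul]
        ring
      refine (gram_poly (m 0) (α 0) (hα 0) (gram_add (gram_star_mul fun _ => phi k (b 0))
        (gram_star_mul fun i => phi k (a 0) * phi k (xs i)))).congr fun i j => ?_
      rw [hform i j]
  | succ J ih =>
      have hform : ∀ i j, phi k (cnnKernelSeq p a b m α (xs i) (xs j) (J+1))
          = ∑ l ∈ Finset.Icc 1 (m (J+1)), ((α (J+1) l : ℂ)) *
            ((star (phi k (b (J+1))) * phi k (b (J+1))) +
              phi k (cnnKernelSeq p a b m α (xs i) (xs j) J) *
                (star (phi k (a (J+1))) * phi k (a (J+1)))) ^ l := by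
        intro i j
        show phi k (polyApply p (m (J+1)) (α (J+1)) _) = _
        rw [phi_polyApply k _ _ (circ_add (circ_mul (circ_conjTranspose (hb (J+1))) (hb (J+1)))
          (circ_mul (circ_cnn a b m α ha hb (hxs i) (hxs j) J)
            (circ_mul (circ_conjTranspose (ha (J+1))) (ha (J+1)))))]
        refine Finset.sum_congr rfl fun l _ => ?_
        congr 2
        rw [phi_add, phi_mul k (hb (J+1)), phi_conjTranspose k (hb (J+1)),
          phi_mul k (circ_mul (circ_conjTranspose (ha (J+1))) (ha (J+1))),
          phi_mul k (ha (J+1)), phi_conjTranspose k (ha (J+1))]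
        simp only [Complex.star_def]
      refine (gram_poly (m (J+1)) (α (J+1)) (hα (J+1)) (gram_add
        (gram_star_mul fun _ => phi k (b (J+1)))
        (gram_mul ih (gram_star_mul fun _ => phi k (a (J+1)))))).congr fun i j => ?_
      rw [hform i j]

end main

end CnnAux

/-- **Proposition 9**: the CNN-type kernel `k̂ = h_L` takes circulant values, satisfies
`k̂(x,y)ᴴ = k̂(y,x)`, and is positive definite with circulant coefficient matrices. -/
theorem cnnKernel_pos_def (p : ℕ) [NeZero p] (L : ℕ) (hL : 1 ≤ L)
    (a b : ℕ → Matrix (ZMod p) (ZMod p) ℂ) (m : ℕ → ℕ) (α : ℕ → ℕ → ℝ)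
    (hα : ∀ j l, 0 ≤ α j l)
    (ha : ∀ j, IsCirculantMat p (a j)) (hb : ∀ j, IsCirculantMat p (b j))
    (X : Set (Matrix (ZMod p) (ZMod p) ℂ)) (hX : ∀ x ∈ X, IsCirculantMat p x) :
    (∀ x ∈ X, ∀ y ∈ X, IsCirculantMat p (cnnKernelSeq p a b m α x y (L - 1))) ∧
    (∀ x ∈ X, ∀ y ∈ X,
      (cnnKernelSeq p a b m α x y (L - 1))ᴴ = cnnKernelSeq p a b m α y x (L - 1)) ∧
    (∀ (n : ℕ) (xs : Fin n → Matrix (ZMod p) (ZMod p) ℂ), (∀ i, xs i ∈ X) →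
      ∀ (c : Fin n → Matrix (ZMod p) (ZMod p) ℂ), (∀ i, IsCirculantMat p (c i)) →
        (∑ i : Fin n, ∑ j : Fin n,
          (c i)ᴴ * cnnKernelSeq p a b m α (xs i) (xs j) (L - 1) * c j).PosSemidef) := by
  open CnnAux in
  refine ⟨fun x hx y hy => circ_cnn a b m α ha hb (hX x hx) (hX y hy) (L - 1),
    fun x hx y hy => conj_cnn a b m α ha hb (hX x hx) (hX y hy) (L - 1),
    fun n xs hxs c hc => ?_⟩
  have hxs' : ∀ i, IsCirculantMat p (xs i) := fun i => hX _ (hxs i)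
  set J := L - 1 with hJ
  set S := ∑ i : Fin n, ∑ j : Fin n,
      (c i)ᴴ * cnnKernelSeq p a b m α (xs i) (xs j) J * c j with hSdef
  have circK : ∀ i j : Fin n, IsCirculantMat p (cnnKernelSeq p a b m α (xs i) (xs j) J) :=
    fun i j => circ_cnn a b m α ha hb (hxs' i) (hxs' j) J
  have circS : IsCirculantMat p S :=
    circ_sum _ _ fun i _ => circ_sum _ _ fun j _ =>
      circ_mul (circ_mul (circ_conjTranspose (hc i)) (circK i j)) (hc j)
  have hterm : ∀ i j : Fin n,
      ((c i)ᴴ * cnnKernelSeq p a b m α (xs i) (xs j) J * c j)ᴴ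
        = (c j)ᴴ * cnnKernelSeq p a b m α (xs j) (xs i) J * c i := by
    intro i j
    rw [Matrix.conjTranspose_mul, Matrix.conjTranspose_mul,
      Matrix.conjTranspose_conjTranspose,
      conj_cnn a b m α ha hb (hxs' i) (hxs' j), ← Matrix.mul_assoc]
  have hermS : S.IsHermitian := by
    show Sᴴ = S
    rw [hSdef, Matrix.conjTranspose_sum]
    calc (∑ i : Fin n, (∑ j : Fin n, (c i)ᴴ * cnnKernelSeq p a b m α (xs i) (xs j) J * c j)ᴴ)
        = ∑ i : Fin n, ∑ j : Fin n, (c j)ᴴ * cnnKernelSeq p a b m α (xs j) (xs i) J * c i := by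
          refine Finset.sum_congr rfl fun i _ => ?_
          rw [Matrix.conjTranspose_sum]
          exact Finset.sum_congr rfl fun j _ => hterm i j
      _ = S := Finset.sum_comm
  refine psd_of_phi circS hermS fun k => ?_
  have hphiS : phi k S = ∑ i : Fin n, ∑ j : Fin n,
      star (phi k (c i)) * phi k (cnnKernelSeq p a b m α (xs i) (xs j) J) * phi k (c j) := by
    rw [hSdef, phi_sum]
    refine Finset.sum_congr rfl fun i _ => ?_
    rw [phi_sum]
    refine Finset.sum_congr rfl fun j _ => ?_
    rw [phi_mul k (hc j), phi_mul k (circK i j), phi_conjTranspose k (hc i),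
      Complex.star_def]
  rw [hphiS]
  exact gram_nonneg (gram_cnn a b m α ha hb hα k xs hxs' J) fun i => phi k (c i)
end

section
/- Let X be a set, (Ω', ν) a measure space, g : X × Ω' → ℂ^{p×p} a map, and M : Ω' → ℂ^{p×p} a map with M(ω) positive semidefinite for ν-almost every ω. Assume that for all x, y ∈ X the function ω ↦ g(x,ω)ᴴ · M(ω) · g(y,ω) is Bochner integrable with respect to ν, and define k(x, y) = ∫_{Ω'} g(x,ω)ᴴ · M(ω) · g(y,ω) dν(ω). Then k is a ℂ^{p×p}-valued positive definite kernel: k(x,y)ᴴ = k(y,x) for all x, y, and for all n ∈ ℕ, all x_1, …, x_n ∈ X, and all c_1, …, c_n ∈ ℂ^{p×p}, Σ_{i,j=1}^n c_iᴴ · k(x_i, x_j) · c_j is positive semidefinite. (Positive definiteness of the integral-type C*-algebra-valued kernels, covering the Gaussian kernel of Definition 6.) -/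
open Matrix MeasureTheory
open scoped BigOperators ComplexOrder

attribute [local instance] Matrix.normedAddCommGroup Matrix.normedSpace

section Helpers
variable {Ω' : Type*} [MeasurableSpace Ω'] {ν : Measure Ω'} {p : ℕ}

noncomputable def ctCLM (p : ℕ) :
    Matrix (Fin p) (Fin p) ℂ →L[ℝ] Matrix (Fin p) (Fin p) ℂ :=
  LinearMap.toContinuousLinearMap
  { toFun := fun A => Aᴴ
    map_add' := fun A B => conjTranspose_add A B
    map_smul' := fun r A => by
      ext i j
      simp [conjTranspose_apply, Matrix.smul_apply, Complex.real_smul] }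

lemma integral_conjT {f : Ω' → Matrix (Fin p) (Fin p) ℂ} (hf : @Integrable _ _ SeminormedAddGroup.toContinuousENorm _ _ f ν) :
    (∫ ω, f ω ∂ν)ᴴ = ∫ ω, (f ω)ᴴ ∂ν := by
  have := (ctCLM p).integral_comp_comm hf
  exact this.symm

noncomputable def quadCLM (p : ℕ) (x : Fin p → ℂ) :
    Matrix (Fin p) (Fin p) ℂ →L[ℂ] ℂ :=
  LinearMap.toContinuousLinearMap
  { toFun := fun A => star x ⬝ᵥ A.mulVec x
    map_add' := fun A B => by simp [Matrix.add_mulVec, dotProduct_add]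
    map_smul' := fun r A => by simp [Matrix.smul_mulVec, dotProduct_smul] }

noncomputable def mulCLM (p : ℕ) (a b : Matrix (Fin p) (Fin p) ℂ) :
    Matrix (Fin p) (Fin p) ℂ →L[ℂ] Matrix (Fin p) (Fin p) ℂ :=
  LinearMap.toContinuousLinearMap
  { toFun := fun A => a * A * b
    map_add' := fun A B => by noncomm_ring
    map_smul' := fun r A => by simp [mul_smul_comm, smul_mul_assoc] }

lemma integral_quad {f : Ω' → Matrix (Fin p) (Fin p) ℂ} (hf : @Integrable _ _ SeminormedAddGroup.toContinuousENorm _ _ f ν)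
    (x : Fin p → ℂ) :
    star x ⬝ᵥ (∫ ω, f ω ∂ν).mulVec x = ∫ ω, star x ⬝ᵥ (f ω).mulVec x ∂ν := by
  have := (quadCLM p x).integral_comp_comm hf
  exact this.symm

lemma integral_mulLR {f : Ω' → Matrix (Fin p) (Fin p) ℂ} (hf : @Integrable _ _ SeminormedAddGroup.toContinuousENorm _ _ f ν)
    (a b : Matrix (Fin p) (Fin p) ℂ) :
    a * (∫ ω, f ω ∂ν) * b = ∫ ω, a * f ω * b ∂ν := by
  have := (mulCLM p a b).integral_comp_comm hf
  exact this.symm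

lemma integral_psd {f : Ω' → Matrix (Fin p) (Fin p) ℂ} (hf : @Integrable _ _ SeminormedAddGroup.toContinuousENorm _ _ f ν)
    (h : ∀ᵐ ω ∂ν, (f ω).PosSemidef) : (∫ ω, f ω ∂ν).PosSemidef := by
  rw [posSemidef_iff_dotProduct_mulVec]
  constructor
  · show _ = _
    rw [integral_conjT hf]
    exact integral_congr_ae (h.mono fun ω hω => hω.1)
  · intro x
    rw [integral_quad hf x]
    have hq : Integrable (fun ω => star x ⬝ᵥ (f ω).mulVec x) ν := by
      exact (quadCLM p x).integrable_comp hf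
    rw [Complex.nonneg_iff]
    constructor
    · rw [← RCLike.re_to_complex, ← integral_re hq]
      apply integral_nonneg_of_ae
      refine h.mono fun ω hω => ?_
      have := hω.dotProduct_mulVec_nonneg x
      rw [Complex.nonneg_iff] at this
      exact this.1
    · rw [← RCLike.im_to_complex, ← integral_im hq]
      rw [eq_comm, ← integral_zero Ω' ℝ]
      apply integral_congr_ae
      refine h.mono fun ω hω => ?_
      have := hω.dotProduct_mulVec_nonneg x
      rw [Complex.nonneg_iff] at this
      exact this.2.symm

end Helpers

/-- **Positive definiteness of integral-type C*-algebra-valued kernels** (covering the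
Gaussian kernel of Definition 6): if `M(ω)` is positive semidefinite for `ν`-a.e. `ω` and
`k(x,y) = ∫ g(x,ω)ᴴ·M(ω)·g(y,ω) dν(ω)` (with integrable integrand), then `k(x,y)ᴴ = k(y,x)`
and all Gram-type combinations of `k` are positive semidefinite. -/
theorem integral_kernel_pos_def (p : ℕ) [NeZero p] {X : Type*} {Ω' : Type*}
    [MeasurableSpace Ω'] (ν : Measure Ω')
    (g : X → Ω' → Matrix (Fin p) (Fin p) ℂ) (M : Ω' → Matrix (Fin p) (Fin p) ℂ)
    (hM : ∀ᵐ ω ∂ν, (M ω).PosSemidef)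
    (hint : ∀ x y : X, @Integrable _ _ SeminormedAddGroup.toContinuousENorm _ _ (fun ω => (g x ω)ᴴ * M ω * g y ω) ν) :
    (∀ x y : X,
      (∫ ω, (g x ω)ᴴ * M ω * g y ω ∂ν)ᴴ = ∫ ω, (g y ω)ᴴ * M ω * g x ω ∂ν) ∧
    (∀ (n : ℕ) (xs : Fin n → X) (c : Fin n → Matrix (Fin p) (Fin p) ℂ),
      (∑ i : Fin n, ∑ j : Fin n,
        (c i)ᴴ * (∫ ω, (g (xs i) ω)ᴴ * M ω * g (xs j) ω ∂ν) * c j).PosSemidef) := by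
  constructor
  · intro x y
    rw [integral_conjT (hint x y)]
    apply integral_congr_ae
    refine hM.mono fun ω hω => ?_
    show ((g x ω)ᴴ * M ω * g y ω)ᴴ = (g y ω)ᴴ * M ω * g x ω
    rw [conjTranspose_mul, conjTranspose_mul, conjTranspose_conjTranspose,
      hω.1.eq, mul_assoc]
  · intro n xs c
    have hintij : ∀ i j : Fin n, @Integrable _ _ SeminormedAddGroup.toContinuousENorm _ _
        (fun ω => (c i)ᴴ * ((g (xs i) ω)ᴴ * M ω * g (xs j) ω) * c j) ν := fun i j => by
      exact (mulCLM p (c i)ᴴ (c j)).integrable_comp (hint (xs i) (xs j))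
    have key : (∑ i : Fin n, ∑ j : Fin n,
        (c i)ᴴ * (∫ ω, (g (xs i) ω)ᴴ * M ω * g (xs j) ω ∂ν) * c j)
        = ∫ ω, ∑ i : Fin n, ∑ j : Fin n,
            (c i)ᴴ * ((g (xs i) ω)ᴴ * M ω * g (xs j) ω) * c j ∂ν := by
      rw [integral_finset_sum _ (fun i _ => integrable_finset_sum _ (fun j _ => hintij i j))]
      refine Finset.sum_congr rfl fun i _ => ?_
      rw [integral_finset_sum _ (fun j _ => hintij i j)]
      exact Finset.sum_congr rfl fun j _ => integral_mulLR (hint _ _) _ _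
    rw [key]
    have hptf : ∀ ω, (∑ i : Fin n, ∑ j : Fin n,
        (c i)ᴴ * ((g (xs i) ω)ᴴ * M ω * g (xs j) ω) * c j)
        = (∑ i : Fin n, g (xs i) ω * c i)ᴴ * M ω * (∑ j : Fin n, g (xs j) ω * c j) := by
      intro ω
      rw [conjTranspose_sum, Finset.sum_mul, Finset.sum_mul]
      refine Finset.sum_congr rfl fun i _ => ?_
      rw [Finset.mul_sum]
      refine Finset.sum_congr rfl fun j _ => ?_
      simp only [conjTranspose_mul]
      noncomm_ring
    apply integral_psd
    · exact integrable_finset_sum _ (fun i _ => integrable_finset_sum _ (fun j _ => hintij i j))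
    · refine hM.mono fun ω hω => ?_
      rw [hptf ω]
      exact hω.conjTranspose_mul_mul_same _
end

section
/- Let Ω = {z_1, …, z_p} ⊂ ℤ^m, let β, σ > 0, let ψ : Ω × Ω → Ω, let a_1, a_2, a_3, a_4 ∈ ℂ^{p×p}, and let x, y : Ω → ℂ be nonvanishing with x̃(z) = x(z)/|x(z)|, regarding ℂ as ℝ². For z ∈ Ω, ω ∈ ℝ^m, η ∈ ℝ², set 𝐱(z) = diag(w ↦ |x(ψ(z, z_w))|), x̃(z,η) = diag(w ↦ exp(−√(−1)·⟨η, x̃(ψ(z, z_w))⟩)), and b(z,ω) = diag(w ↦ exp(−√(−1)·⟨ω, ψ(z, z_w)⟩)). Let λ_β and λ_σ be the Gaussian probability measures with mean 0 and covariances β^{−2}·I on ℝ^m and σ^{−2}·I on ℝ², respectively, and define k(x, y) = ∫_{ℝ²} ∫_{ℝ^m} Σ_{z,z'∈Ω} a_1ᴴ·𝐱(z)·a_2ᴴ·b(z,ω)ᴴ·a_3ᴴ·x̃(z,η)ᴴ·a_4ᴴ·a_4·ỹ(z',η)·a_3·b(z',ω)·a_2·𝐲(z')·a_1 dλ_β(ω)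 dλ_σ(η). Then k is a ℂ^{p×p}-valued positive definite kernel: for all n ∈ ℕ, nonvanishing inputs x^{(1)}, …, x^{(n)} : Ω → ℂ, and c_1, …, c_n ∈ ℂ^{p×p}, the matrix Σ_{i,j=1}^n c_iᴴ · k(x^{(i)}, x^{(j)}) · c_j is positive semidefinite. (Proposition 13: the generalized matrix-valued convolutional kernel is positive definite.) -/
/-!
The integrand of `genConvKernel` factors as `T(x)ᴴ * T(y)` for the feature map
`T(x)(η, ω) = a₄ * Σ_z x̃(z, η) * a₃ * b(z, ω) * a₂ * 𝐱(z) * a₁`, because the diagonal matrices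
`𝐱(z)` are real, hence Hermitian. By Fubini, `k(x, y) = ∫ T(x)ᴴ * T(y)` over the product of the
two Gaussian measures, so `Σᵢⱼ cᵢᴴ * k(xᵢ, xⱼ) * cⱼ = ∫ (Σᵢ T(xᵢ) * cᵢ)ᴴ * (Σⱼ T(xⱼ) * cⱼ)` is an
integral of positive semidefinite matrices. Everything is integrable because `T(x)` is
continuous and bounded: its phase factors are unitary diagonal matrices.
-/

open Matrix MeasureTheory ProbabilityTheory
open scoped BigOperators ComplexOrder

attribute [local instance] Matrix.normedAddCommGroup Matrix.normedSpace

/-- The Gaussian probability measure on `ℝ^k` with mean `0` and covariance `β⁻²·I`,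
realized as the product of `k` i.i.d. one-dimensional Gaussians of variance `β⁻²`. -/
noncomputable def gaussPi (k : ℕ) (β : ℝ) : Measure (Fin k → ℝ) :=
  Measure.pi fun _ => gaussianReal 0 ((β⁻¹ ^ 2).toNNReal)

/-- The phase `x̃(u) = x(u)/|x(u)|`. -/
noncomputable def phPt (m : ℕ) (x : (Fin m → ℤ) → ℂ) (u : Fin m → ℤ) : ℂ :=
  x u / (‖x u‖ : ℂ)

/-- `𝐱(z) = diag(w ↦ |x(ψ(z, z_w))|)`. -/
noncomputable def diagAbsM (p m : ℕ) (z : Fin p → Fin m → ℤ)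
    (ψ : (Fin m → ℤ) → (Fin m → ℤ) → (Fin m → ℤ)) (x : (Fin m → ℤ) → ℂ)
    (zpt : Fin m → ℤ) : Matrix (Fin p) (Fin p) ℂ :=
  Matrix.diagonal fun w => (‖x (ψ zpt (z w))‖ : ℂ)

/-- `x̃(z,η) = diag(w ↦ exp(−√(−1)·⟨η, x̃(ψ(z, z_w))⟩))`, identifying `ℂ` with `ℝ²`. -/
noncomputable def diagPhaseM (p m : ℕ) (z : Fin p → Fin m → ℤ)
    (ψ : (Fin m → ℤ) → (Fin m → ℤ) → (Fin m → ℤ)) (x : (Fin m → ℤ) → ℂ)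
    (zpt : Fin m → ℤ) (η : Fin 2 → ℝ) : Matrix (Fin p) (Fin p) ℂ :=
  Matrix.diagonal fun w =>
    Complex.exp (-Complex.I *
      ((η 0 * (phPt m x (ψ zpt (z w))).re + η 1 * (phPt m x (ψ zpt (z w))).im : ℝ) : ℂ))

/-- `b(z,ω) = diag(w ↦ exp(−√(−1)·⟨ω, ψ(z, z_w)⟩))`. -/
noncomputable def diagBM (p m : ℕ) (z : Fin p → Fin m → ℤ)
    (ψ : (Fin m → ℤ) → (Fin m → ℤ) → (Fin m → ℤ))
    (zpt : Fin m → ℤ) (ω : Fin m → ℝ) : Matrix (Fin p) (Fin p) ℂ :=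
  Matrix.diagonal fun w =>
    Complex.exp (-Complex.I * ((∑ i : Fin m, ω i * (ψ zpt (z w) i : ℝ) : ℝ) : ℂ))

/-- The generalized matrix-valued convolutional kernel
`k(x,y) = ∫∫ Σ_{z,z'∈Ω} a₁ᴴ·𝐱(z)·a₂ᴴ·b(z,ω)ᴴ·a₃ᴴ·x̃(z,η)ᴴ·a₄ᴴ·a₄·ỹ(z',η)·a₃·b(z',ω)·a₂·𝐲(z')·a₁
dλ_β(ω) dλ_σ(η)` (entrywise Bochner integral). -/
noncomputable def genConvKernel (p m : ℕ) (z : Fin p → Fin m → ℤ)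
    (ψ : (Fin m → ℤ) → (Fin m → ℤ) → (Fin m → ℤ)) (β σ : ℝ)
    (a1 a2 a3 a4 : Matrix (Fin p) (Fin p) ℂ) (x y : (Fin m → ℤ) → ℂ) :
    Matrix (Fin p) (Fin p) ℂ :=
  ∫ η, (∫ ω,
      ∑ u : Fin p, ∑ u' : Fin p,
        a1ᴴ * diagAbsM p m z ψ x (z u) * a2ᴴ * (diagBM p m z ψ (z u) ω)ᴴ * a3ᴴ *
          (diagPhaseM p m z ψ x (z u) η)ᴴ * a4ᴴ * a4 * diagPhaseM p m z ψ y (z u') η *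
          a3 * diagBM p m z ψ (z u') ω * a2 * diagAbsM p m z ψ y (z u') * a1
    ∂(gaussPi m β)) ∂(gaussPi 2 σ)

-- `Matrix.normedAddCommGroup` is only a local instance, and the topology it induces is not
-- reducibly the product topology of `Matrix`, so instance search misses these two.
instance Matrix.continuousENorm {α m n : Type*} [NormedAddCommGroup α] [Fintype m] [Fintype n] :
    ContinuousENorm (Matrix m n α) :=
  SeminormedAddGroup.toContinuousENorm

instance Matrix.pseudoMetrizableSpace {α m n : Type*} [TopologicalSpace α]
    [TopologicalSpace.PseudoMetrizableSpace α] [Finite m] [Finite n] :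
    TopologicalSpace.PseudoMetrizableSpace (Matrix m n α) :=
  inferInstanceAs (TopologicalSpace.PseudoMetrizableSpace (m → n → α))

section MatrixIntegral

variable {α 𝕜 : Type*} [RCLike 𝕜] [MeasurableSpace α] {μ : Measure α}
  {ι k l n r : Type*} [Fintype ι] [Fintype k] [Fintype l] [Fintype n] [Fintype r]

theorem Matrix.integrable_mul_mul (A : Matrix k l 𝕜) (B : Matrix n r 𝕜) {f : α → Matrix l n 𝕜}
    (hf : Integrable f μ) : Integrable (fun a => A * f a * B) μ :=
  ((mulRightLinearMap k 𝕜 B).toContinuousLinearMap.comp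
    (mulLeftLinearMap n 𝕜 A).toContinuousLinearMap).integrable_comp hf

theorem Matrix.integral_mul_mul (A : Matrix k l 𝕜) (B : Matrix n r 𝕜) {f : α → Matrix l n 𝕜}
    (hf : Integrable f μ) : ∫ a, A * f a * B ∂μ = A * (∫ a, f a ∂μ) * B :=
  ((mulRightLinearMap k 𝕜 B).toContinuousLinearMap.comp
    (mulLeftLinearMap n 𝕜 A).toContinuousLinearMap).integral_comp_comm hf

theorem RCLike.integral_nonneg {f : α → 𝕜} (hf : ∀ᵐ a ∂μ, 0 ≤ f a) : 0 ≤ ∫ a, f a ∂μ := by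
  by_cases hfi : Integrable f μ
  swap; · rw [integral_undef hfi]
  rw [RCLike.nonneg_iff, ← integral_re hfi, ← integral_im hfi]
  refine ⟨integral_nonneg_of_ae ?_, integral_eq_zero_of_ae ?_⟩
  · filter_upwards [hf] with a ha using (RCLike.nonneg_iff.1 ha).1
  · filter_upwards [hf] with a ha using (RCLike.nonneg_iff.1 ha).2

theorem Matrix.PosSemidef.integral {f : α → Matrix n n 𝕜} (hf : ∀ᵐ a ∂μ, (f a).PosSemidef) :
    (∫ a, f a ∂μ).PosSemidef := by
  by_cases hfi : Integrable f μ
  swap; · rw [integral_undef hfi]; exact .zero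
  refine .of_dotProduct_mulVec_nonneg ?_ fun v => ?_
  · calc (∫ a, f a ∂μ)ᴴ = ∫ a, (f a)ᴴ ∂μ := ((starL' ℝ).integral_comp_comm f).symm
      _ = ∫ a, f a ∂μ := integral_congr_ae (by filter_upwards [hf] with a ha using ha.1)
  · let quadForm : Matrix n n 𝕜 →ₗ[𝕜] 𝕜 :=
      { toFun := fun M => star v ⬝ᵥ (M *ᵥ v)
        map_add' := fun A B => by simp [add_mulVec]
        map_smul' := fun c M => by simp [smul_mulVec] }
    calc 0 ≤ ∫ a, star v ⬝ᵥ (f a *ᵥ v) ∂μ :=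
          RCLike.integral_nonneg <| by
            filter_upwards [hf] with a ha using ha.dotProduct_mulVec_nonneg v
      _ = star v ⬝ᵥ ((∫ a, f a ∂μ) *ᵥ v) := quadForm.toContinuousLinearMap.integral_comp_comm hfi

theorem Matrix.posSemidef_sum_conjTranspose_mul_integral_conjTranspose_mul
    (F : ι → α → Matrix l n 𝕜) (hF : ∀ i j, Integrable (fun a => (F i a)ᴴ * F j a) μ)
    (c : ι → Matrix n r 𝕜) :
    (∑ i, ∑ j, (c i)ᴴ * (∫ a, (F i a)ᴴ * F j a ∂μ) * c j).PosSemidef := by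
  have hint i j := integrable_mul_mul (c i)ᴴ (c j) (hF i j)
  have hgram : ∀ a, ∑ i, ∑ j, (c i)ᴴ * ((F i a)ᴴ * F j a) * c j
      = (∑ i, F i a * c i)ᴴ * ∑ j, F j a * c j := fun a => by
    simp only [conjTranspose_sum, conjTranspose_mul, Matrix.sum_mul, Matrix.mul_sum,
      Matrix.mul_assoc]
    exact Finset.sum_comm
  have hsum : ∑ i, ∑ j, ∫ a, (c i)ᴴ * ((F i a)ᴴ * F j a) * c j ∂μ
      = ∫ a, ∑ i, ∑ j, (c i)ᴴ * ((F i a)ᴴ * F j a) * c j ∂μ := by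
    rw [integral_finsetSum _ fun i _ => integrable_finsetSum _ fun j _ => hint i j]
    exact Finset.sum_congr rfl fun i _ => (integral_finsetSum _ fun j _ => hint i j).symm
  simp_rw [← integral_mul_mul _ _ (hF _ _), hsum, hgram]
  exact PosSemidef.integral (ae_of_all _ fun a => posSemidef_conjTranspose_mul_self _)

end MatrixIntegral

section MatrixNorm

variable {𝕜 : Type*} [RCLike 𝕜] {l m n : Type*} [Fintype l] [Fintype m] [Fintype n]

theorem Matrix.norm_mul_le_card_mul (A : Matrix l m 𝕜) (B : Matrix m n 𝕜) :
    ‖A * B‖ ≤ Fintype.card m * (‖A‖ * ‖B‖) := by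
  refine (norm_le_iff (by positivity)).2 fun i j => ?_
  calc ‖(A * B) i j‖ ≤ ∑ k, ‖A i k * B k j‖ := norm_sum_le _ _
    _ ≤ ∑ _k : m, ‖A‖ * ‖B‖ := Finset.sum_le_sum fun k _ => (norm_mul_le _ _).trans <|
        mul_le_mul (norm_entry_le_entrywise_sup_norm A) (norm_entry_le_entrywise_sup_norm B)
          (norm_nonneg _) (norm_nonneg _)
    _ = Fintype.card m * (‖A‖ * ‖B‖) := by simp

theorem Matrix.norm_mul_le_of_le {A : Matrix l m 𝕜} {B : Matrix m n 𝕜} {a b : ℝ} (ha : ‖A‖ ≤ a)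
    (hb : ‖B‖ ≤ b) : ‖A * B‖ ≤ Fintype.card m * (a * b) :=
  (norm_mul_le_card_mul A B).trans <| by
    gcongr
    exact (norm_nonneg A).trans ha

end MatrixNorm

theorem Matrix.norm_diagonal_exp_neg_I_mul_le {n : Type*} [Fintype n] [DecidableEq n]
    (r : n → ℝ) : ‖diagonal fun w => Complex.exp (-Complex.I * r w)‖ ≤ 1 := by
  rw [norm_diagonal]
  exact (pi_norm_le_iff_of_nonneg zero_le_one).2 fun w => by simp [Complex.norm_exp]

instance isProbabilityMeasure_gaussPi (k : ℕ) (β : ℝ) : IsProbabilityMeasure (gaussPi k β) := by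
  unfold gaussPi; infer_instance

noncomputable def convFeature (p m : ℕ) (z : Fin p → Fin m → ℤ)
    (ψ : (Fin m → ℤ) → (Fin m → ℤ) → (Fin m → ℤ))
    (a1 a2 a3 a4 : Matrix (Fin p) (Fin p) ℂ) (x : (Fin m → ℤ) → ℂ)
    (η : Fin 2 → ℝ) (ω : Fin m → ℝ) : Matrix (Fin p) (Fin p) ℂ :=
  a4 * ∑ u, diagPhaseM p m z ψ x (z u) η * a3 * diagBM p m z ψ (z u) ω * a2 *
    diagAbsM p m z ψ x (z u) * a1

section ConvFeature

variable {p m : ℕ} (z : Fin p → Fin m → ℤ) (ψ : (Fin m → ℤ) → (Fin m → ℤ) → (Fin m → ℤ))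
  (a1 a2 a3 a4 : Matrix (Fin p) (Fin p) ℂ)

theorem continuous_convFeature (x : (Fin m → ℤ) → ℂ) :
    Continuous fun q : (Fin 2 → ℝ) × (Fin m → ℝ) =>
      convFeature p m z ψ a1 a2 a3 a4 x q.1 q.2 := by
  unfold convFeature diagPhaseM diagBM
  fun_prop

theorem exists_norm_convFeature_le (x : (Fin m → ℤ) → ℂ) :
    ∃ C, ∀ η ω, ‖convFeature p m z ψ a1 a2 a3 a4 x η ω‖ ≤ C :=
  ⟨_, fun _ _ => norm_mul_le_of_le le_rfl <|
    (norm_sum_le _ _).trans <| Finset.sum_le_sum fun _ _ =>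
      norm_mul_le_of_le (norm_mul_le_of_le (norm_mul_le_of_le (norm_mul_le_of_le
        (norm_mul_le_of_le (norm_diagonal_exp_neg_I_mul_le _) le_rfl)
        (norm_diagonal_exp_neg_I_mul_le _)) le_rfl) le_rfl) le_rfl⟩

theorem integrable_conjTranspose_convFeature_mul {μ : Measure ((Fin 2 → ℝ) × (Fin m → ℝ))}
    [IsFiniteMeasure μ] (x y : (Fin m → ℤ) → ℂ) :
    Integrable (fun q => (convFeature p m z ψ a1 a2 a3 a4 x q.1 q.2)ᴴ *
      convFeature p m z ψ a1 a2 a3 a4 y q.1 q.2) μ := by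
  obtain ⟨C, hC⟩ := exists_norm_convFeature_le z ψ a1 a2 a3 a4 x
  obtain ⟨D, hD⟩ := exists_norm_convFeature_le z ψ a1 a2 a3 a4 y
  have hcont := (continuous_convFeature z ψ a1 a2 a3 a4 x).matrix_conjTranspose.matrix_mul
    (continuous_convFeature z ψ a1 a2 a3 a4 y)
  refine .of_bound hcont.aestronglyMeasurable (Fintype.card (Fin p) * (C * D))
    (ae_of_all _ fun q => ?_)
  refine norm_mul_le_of_le ?_ (hD q.1 q.2)
  rw [norm_conjTranspose]
  exact hC q.1 q.2

theorem diagAbsM_conjTranspose (x : (Fin m → ℤ) → ℂ) (zpt : Fin m → ℤ) :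
    (diagAbsM p m z ψ x zpt)ᴴ = diagAbsM p m z ψ x zpt := by
  simp [diagAbsM, diagonal_conjTranspose]

theorem genConvKernel_eq_integral (β σ : ℝ) (x y : (Fin m → ℤ) → ℂ) :
    genConvKernel p m z ψ β σ a1 a2 a3 a4 x y =
      ∫ q, (convFeature p m z ψ a1 a2 a3 a4 x q.1 q.2)ᴴ *
        convFeature p m z ψ a1 a2 a3 a4 y q.1 q.2 ∂(gaussPi 2 σ).prod (gaussPi m β) := by
  have hfactor : ∀ η ω, ∑ u, ∑ u',
        a1ᴴ * diagAbsM p m z ψ x (z u) * a2ᴴ * (diagBM p m z ψ (z u) ω)ᴴ * a3ᴴ *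
          (diagPhaseM p m z ψ x (z u) η)ᴴ * a4ᴴ * a4 * diagPhaseM p m z ψ y (z u') η *
          a3 * diagBM p m z ψ (z u') ω * a2 * diagAbsM p m z ψ y (z u') * a1
      = (convFeature p m z ψ a1 a2 a3 a4 x η ω)ᴴ * convFeature p m z ψ a1 a2 a3 a4 y η ω := by
    intro η ω
    simp only [convFeature, conjTranspose_mul, conjTranspose_sum, Matrix.sum_mul, Matrix.mul_sum,
      diagAbsM_conjTranspose, Matrix.mul_assoc]
    exact Finset.sum_comm
  simp only [genConvKernel, hfactor]
  exact integral_integral (integrable_conjTranspose_convFeature_mul z ψ a1 a2 a3 a4 x y)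

end ConvFeature

theorem genConvKernel_pos_def_general (p m : ℕ) (z : Fin p → Fin m → ℤ)
    (ψ : (Fin m → ℤ) → (Fin m → ℤ) → (Fin m → ℤ))
    (β σ : ℝ)
    (a1 a2 a3 a4 : Matrix (Fin p) (Fin p) ℂ)
    (n : ℕ) (xs : Fin n → (Fin m → ℤ) → ℂ)
    (c : Fin n → Matrix (Fin p) (Fin p) ℂ) :
    (∑ i : Fin n, ∑ j : Fin n,
      (c i)ᴴ * genConvKernel p m z ψ β σ a1 a2 a3 a4 (xs i) (xs j) * c j).PosSemidef := by
  simp only [genConvKernel_eq_integral]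
  exact posSemidef_sum_conjTranspose_mul_integral_conjTranspose_mul _
    (fun i j => integrable_conjTranspose_convFeature_mul z ψ a1 a2 a3 a4 (xs i) (xs j)) c

/-- **Proposition 13**: the generalized matrix-valued convolutional kernel is a
`ℂ^{p×p}`-valued positive definite kernel: all its Gram-type combinations over nonvanishing
inputs are positive semidefinite. Here `Ω = {z_1, …, z_p}` and `ψ` maps `Ω × Ω` into `Ω`. -/
theorem genConvKernel_pos_def (p m : ℕ) (z : Fin p → Fin m → ℤ)
    (ψ : (Fin m → ℤ) → (Fin m → ℤ) → (Fin m → ℤ))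
    (hψ : ∀ u w : Fin p, ∃ v : Fin p, ψ (z u) (z w) = z v)
    (β σ : ℝ) (hβ : 0 < β) (hσ : 0 < σ)
    (a1 a2 a3 a4 : Matrix (Fin p) (Fin p) ℂ)
    (n : ℕ) (xs : Fin n → (Fin m → ℤ) → ℂ) (hxs : ∀ i (u : Fin p), xs i (z u) ≠ 0)
    (c : Fin n → Matrix (Fin p) (Fin p) ℂ) :
    (∑ i : Fin n, ∑ j : Fin n,
      (c i)ᴴ * genConvKernel p m z ψ β σ a1 a2 a3 a4 (xs i) (xs j) * c j).PosSemidef :=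
  genConvKernel_pos_def_general p m z ψ β σ a1 a2 a3 a4 n xs c
end

section
/- In the setting of the generalized matrix-valued convolutional kernel k, suppose a_1 = a_2 = a_3 = a_4 = I (the identity matrix). Then for all nonvanishing x, y : Ω → ℂ, k(x, y) is the diagonal matrix whose w-th diagonal entry equals čk(x,y)(z_w) = Σ_{z,z'∈Ω} |x(ψ(z,z_w))|·|y(ψ(z',z_w))|·exp(−‖ψ(z,z_w) − ψ(z',z_w)‖²/(2β²))·exp(−|x̃(ψ(z,z_w)) − ỹ(ψ(z',z_w))|²/(2σ²)). (Proposition 14: with identity parameters, the matrix-valued kernel reduces to the function-valued convolutional kernel čk.) -/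
open Matrix MeasureTheory ProbabilityTheory
open scoped BigOperators ComplexOrder

attribute [local instance] Matrix.normedAddCommGroup Matrix.normedSpace

noncomputable instance matCENorm (n : ℕ) : ContinuousENorm (Matrix (Fin n) (Fin n) ℂ) := by
  exact SeminormedAddGroup.toContinuousENorm

noncomputable instance matPM (n : ℕ) : TopologicalSpace.PseudoMetrizableSpace (Matrix (Fin n) (Fin n) ℂ) := by
  exact inferInstanceAs (TopologicalSpace.PseudoMetrizableSpace (Fin n → Fin n → ℂ))

open scoped ENNReal NNReal Real

section Aux

instance gaussPi_isProbabilityMeasure (k : ℕ) (β : ℝ) :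
    IsProbabilityMeasure (gaussPi k β) := by
  unfold gaussPi; infer_instance

lemma charGauss1 {β : ℝ} (hβ : 0 < β) (c : ℝ) :
    ∫ t, Complex.exp (Complex.I * ((c * t : ℝ) : ℂ)) ∂(gaussianReal 0 ((β⁻¹ ^ 2).toNNReal))
      = Real.exp (-c ^ 2 / (2 * β ^ 2)) := by
  have hv0 : (0:ℝ) < β⁻¹ ^ 2 := by positivity
  have hv : ((β⁻¹ ^ 2).toNNReal : ℝ) = β⁻¹ ^ 2 := Real.coe_toNNReal _ hv0.le
  have hvne : (β⁻¹ ^ 2).toNNReal ≠ 0 := by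
    simp only [ne_eq, Real.toNNReal_eq_zero, not_le]; exact hv0
  set v : ℝ≥0 := (β⁻¹ ^ 2).toNNReal with hvdef
  have hvpos : (0:ℝ) < (v:ℝ) := by rw [hv]; exact hv0
  rw [gaussianReal_of_var_ne_zero 0 hvne]
  rw [show (gaussianPDF 0 v)
      = fun t => (((gaussianPDFReal 0 v t).toNNReal : ℝ≥0) : ℝ≥0∞) from rfl]
  rw [integral_withDensity_eq_integral_smul ((measurable_gaussianPDFReal 0 v).real_toNNReal) _]
  have hpdf : ∀ t : ℝ, ((gaussianPDFReal 0 v t).toNNReal : ℝ≥0) • Complex.exp (Complex.I * ((c * t : ℝ) : ℂ))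
      = ((Real.sqrt (2 * Real.pi * v))⁻¹ : ℝ) •
          Complex.exp ((((-(1/(2*(v:ℝ)))) : ℝ) : ℂ) * (t:ℂ)^2 + (Complex.I * c) * t + 0) := by
    intro t
    rw [NNReal.smul_def, Real.coe_toNNReal _ (gaussianPDFReal_nonneg 0 v t)]
    simp only [Complex.real_smul, gaussianPDFReal, sub_zero, Complex.ofReal_mul,
      Complex.ofReal_exp, Complex.ofReal_inv, mul_assoc, ← Complex.exp_add]
    congr 1
    push_cast
    ring
  simp only [hpdf]
  rw [integral_smul]
  have hb : ((((-(1/(2*(v:ℝ)))) : ℝ) : ℂ)).re < 0 := by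
    rw [Complex.ofReal_re]
    have : (0:ℝ) < 1/(2*(v:ℝ)) := by positivity
    linarith
  rw [integral_cexp_quadratic hb (Complex.I * c) 0]
  have h2 : ((Real.pi : ℂ) / -((((-(1/(2*(v:ℝ)))) : ℝ) : ℂ))) = ((2 * Real.pi * (v:ℝ) : ℝ) : ℂ) := by
    have hvne' : ((v:ℝ):ℂ) ≠ 0 := by exact_mod_cast hvpos.ne'
    push_cast
    rw [neg_neg]
    field_simp
  rw [h2]
  have hS : (0:ℝ) < 2 * Real.pi * (v:ℝ) := by positivity
  have h3 : ((2 * Real.pi * (v:ℝ) : ℝ) : ℂ) ^ ((1:ℂ)/2) = ((Real.sqrt (2 * Real.pi * (v:ℝ)) : ℝ) : ℂ) := by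
    rw [show ((1:ℂ)/2) = (((1:ℝ)/2 : ℝ) : ℂ) by norm_num]
    rw [← Complex.ofReal_cpow hS.le]
    rw [Real.sqrt_eq_rpow]
  rw [h3]
  have h4 : (0 : ℂ) - (Complex.I * c)^2 / (4 * ((((-(1/(2*(v:ℝ)))) : ℝ) : ℂ))) = ((-c^2/(2*β^2) : ℝ) : ℂ) := by
    have hvC : ((v:ℝ):ℂ) = (β:ℂ)⁻¹^2 := by exact_mod_cast hv
    have hβC : (β:ℂ) ≠ 0 := by exact_mod_cast hβ.ne'
    push_cast
    rw [hvC, mul_pow, Complex.I_sq]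
    field_simp
    ring
  rw [h4, Complex.ofReal_exp, Complex.real_smul, ← mul_assoc, ← Complex.ofReal_mul,
    inv_mul_cancel₀ (Real.sqrt_ne_zero'.mpr hS), Complex.ofReal_one, one_mul]

lemma charGaussPi (k : ℕ) {β : ℝ} (hβ : 0 < β) (c : Fin k → ℝ) :
    ∫ ω, Complex.exp (Complex.I * ((∑ i, c i * ω i : ℝ) : ℂ)) ∂gaussPi k β
      = Real.exp (-(∑ i, (c i)^2) / (2 * β^2)) := by
  letI : MeasureSpace ℝ := ⟨gaussianReal 0 ((β⁻¹ ^ 2).toNNReal)⟩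
  haveI : SigmaFinite (volume : Measure ℝ) := by
    change SigmaFinite (gaussianReal 0 _); infer_instance
  have hsplit : ∀ ω : Fin k → ℝ, Complex.exp (Complex.I * ((∑ i, c i * ω i : ℝ) : ℂ))
      = ∏ i, Complex.exp (Complex.I * ((c i * ω i : ℝ) : ℂ)) := by
    intro ω
    rw [← Complex.exp_sum]
    congr 1
    push_cast
    rw [Finset.mul_sum]
  calc ∫ ω, Complex.exp (Complex.I * ((∑ i, c i * ω i : ℝ) : ℂ)) ∂gaussPi k β
      = ∫ ω : Fin k → ℝ, ∏ i, Complex.exp (Complex.I * ((c i * ω i : ℝ) : ℂ)) := by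
        rw [show (volume : Measure (Fin k → ℝ)) = gaussPi k β from rfl]
        exact integral_congr_ae (Filter.Eventually.of_forall hsplit)
    _ = ∏ i, ∫ t : ℝ, Complex.exp (Complex.I * ((c i * t : ℝ) : ℂ)) :=
        MeasureTheory.integral_fintype_prod_eq_prod (ι := Fin k)
          (fun i t => Complex.exp (Complex.I * ((c i * t : ℝ) : ℂ)))
    _ = ∏ i, ((Real.exp (-(c i) ^ 2 / (2 * β ^ 2)) : ℝ) : ℂ) := by
        refine Finset.prod_congr rfl fun i _ => ?_
        exact charGauss1 hβ (c i)
    _ = Real.exp (-(∑ i, (c i)^2) / (2 * β^2)) := by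
        rw [← Complex.ofReal_prod, ← Real.exp_sum]
        congr 1
        simp [neg_div, Finset.sum_div]

lemma integral_matrix_apply {α : Type*} [MeasurableSpace α] {μ : Measure α} {n : ℕ}
    {f : α → Matrix (Fin n) (Fin n) ℂ} (hf : Integrable f μ) (i j : Fin n) :
    (∫ a, f a ∂μ) i j = ∫ a, f a i j ∂μ := by
  have h := (LinearMap.toContinuousLinearMap (Matrix.entryLinearMap ℂ ℂ i j)).integral_comp_comm hf
  exact h.symm

lemma integrable_of_bound {α E : Type*} [MeasurableSpace α] [NormedAddCommGroup E]
    {μ : Measure α} [IsFiniteMeasure μ] {f : α → E} (hm : AEStronglyMeasurable f μ)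
    (C : ℝ) (h : ∀ a, ‖f a‖ ≤ C) : Integrable f μ :=
  Integrable.mono' (integrable_const C) hm (Filter.Eventually.of_forall h)

lemma diagonal_sum' {n : Type*} [DecidableEq n] [Fintype n] {ι : Type*} (s : Finset ι)
    (f : ι → n → ℂ) :
    ∑ i ∈ s, Matrix.diagonal (f i) = Matrix.diagonal (fun w => ∑ i ∈ s, f i w) := by
  rw [show (fun w => ∑ i ∈ s, f i w) = ∑ i ∈ s, f i by funext w; simp]
  exact (map_sum (Matrix.diagonalAddMonoidHom n ℂ) f s).symm

lemma norm_cexp_I_mul_real (t : ℝ) : ‖Complex.exp (Complex.I * (t : ℂ))‖ = 1 := by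
  rw [Complex.norm_exp]
  simp

end Aux


section MainAux

attribute [local instance] Matrix.normedAddCommGroup Matrix.normedSpace

lemma mul_exp_combine (a b : ℝ) (e1 e2 e3 e4 f1 f2 : ℂ) (h : e1+e2+e3+e4 = f1+f2) :
    (a:ℂ) * Complex.exp e1 * Complex.exp e2 * Complex.exp e3 * Complex.exp e4 * (b:ℂ)
      = ((a*b:ℝ):ℂ) * Complex.exp f1 * Complex.exp f2 := by
  have h2 : Complex.exp e1 * Complex.exp e2 * Complex.exp e3 * Complex.exp e4
      = Complex.exp f1 * Complex.exp f2 := by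
    simp only [← Complex.exp_add]; rw [h]
  calc (a:ℂ) * Complex.exp e1 * Complex.exp e2 * Complex.exp e3 * Complex.exp e4 * (b:ℂ)
      = (a:ℂ)*(b:ℂ)*(Complex.exp e1 * Complex.exp e2 * Complex.exp e3 * Complex.exp e4) := by ring
    _ = (a:ℂ)*(b:ℂ)*(Complex.exp f1 * Complex.exp f2) := by rw [h2]
    _ = ((a*b:ℝ):ℂ) * Complex.exp f1 * Complex.exp f2 := by push_cast; ring

lemma integrable_diag_of_bound {k n : ℕ} {μ : Measure (Fin k → ℝ)} [IsProbabilityMeasure μ]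
    {g : (Fin k → ℝ) → Fin n → ℂ} (hg : Continuous g) (C : ℝ) (hC : 0 ≤ C)
    (hb : ∀ a w, ‖g a w‖ ≤ C) :
    Integrable (fun a => Matrix.diagonal (g a)) μ := by
  apply Integrable.mono' (integrable_const C)
    (hg.matrix_diagonal.aestronglyMeasurable)
  refine Filter.Eventually.of_forall fun a => ?_
  rw [Matrix.norm_le_iff hC]
  intro i j
  rcases eq_or_ne i j with rfl | hij
  · rw [Matrix.diagonal_apply_eq]; exact hb a i
  · rw [Matrix.diagonal_apply_ne _ hij]; simpa using hC

lemma integrable_const_mul_cexp {k : ℕ} (β : ℝ) (A : ℂ) (c : Fin k → ℝ) :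
    Integrable (fun ω : Fin k → ℝ =>
      A * Complex.exp (Complex.I * ((∑ i, c i * ω i : ℝ) : ℂ))) (gaussPi k β) := by
  apply Integrable.mono' (integrable_const ‖A‖) (by fun_prop : Continuous _).aestronglyMeasurable
  refine Filter.Eventually.of_forall fun ω => ?_
  rw [norm_mul]
  have : ‖Complex.exp (Complex.I * ((∑ i, c i * ω i : ℝ) : ℂ))‖ = 1 := by
    rw [Complex.norm_exp]; simp
  rw [this, mul_one]

variable (p m : ℕ) (z : Fin p → Fin m → ℤ)
  (ψ : (Fin m → ℤ) → (Fin m → ℤ) → (Fin m → ℤ)) (x y : (Fin m → ℤ) → ℂ)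

/-- coefficient `|x(ψ(z_u,z_w))|·|y(ψ(z_u',z_w))|`. -/
noncomputable def pCoef (u u' w : Fin p) : ℝ :=
  ‖x (ψ (z u) (z w))‖ * ‖y (ψ (z u') (z w))‖

noncomputable def pCψ (u u' w : Fin p) : Fin m → ℝ :=
  fun i => ((ψ (z u) (z w) i : ℝ) - (ψ (z u') (z w) i : ℝ))

noncomputable def pCφ (u u' w : Fin p) : Fin 2 → ℝ :=
  ![(phPt m x (ψ (z u) (z w))).re - (phPt m y (ψ (z u') (z w))).re,
    (phPt m x (ψ (z u) (z w))).im - (phPt m y (ψ (z u') (z w))).im]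

noncomputable def pG1 (η : Fin 2 → ℝ) (ω : Fin m → ℝ) : Fin p → ℂ :=
  fun w => ∑ u : Fin p, ∑ u' : Fin p,
    ((pCoef p m z ψ x y u u' w : ℝ) : ℂ)
      * Complex.exp (Complex.I * ((∑ i, pCφ p m z ψ x y u u' w i * η i : ℝ) : ℂ))
      * Complex.exp (Complex.I * ((∑ i, pCψ p m z ψ u u' w i * ω i : ℝ) : ℂ))

noncomputable def pG2 (β : ℝ) (η : Fin 2 → ℝ) : Fin p → ℂ :=
  fun w => ∑ u : Fin p, ∑ u' : Fin p,
    ((pCoef p m z ψ x y u u' w : ℝ) : ℂ)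
      * Complex.exp (Complex.I * ((∑ i, pCφ p m z ψ x y u u' w i * η i : ℝ) : ℂ))
      * ((Real.exp (-(∑ i, (pCψ p m z ψ u u' w i)^2) / (2 * β^2)) : ℝ) : ℂ)

lemma pCoef_nonneg (u u' w : Fin p) : 0 ≤ pCoef p m z ψ x y u u' w := by
  unfold pCoef; positivity

/-- uniform bound -/
noncomputable def pC : ℝ := ∑ w : Fin p, ∑ u : Fin p, ∑ u' : Fin p, pCoef p m z ψ x y u u' w

lemma pC_nonneg : 0 ≤ pC p m z ψ x y :=
  Finset.sum_nonneg fun w _ => Finset.sum_nonneg fun u _ => Finset.sum_nonneg fun u' _ =>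
    pCoef_nonneg p m z ψ x y u u' w

lemma sum_coef_le (w : Fin p) :
    ∑ u : Fin p, ∑ u' : Fin p, pCoef p m z ψ x y u u' w ≤ pC p m z ψ x y :=
  Finset.single_le_sum (f := fun w => ∑ u : Fin p, ∑ u' : Fin p, pCoef p m z ψ x y u u' w)
    (fun w _ => Finset.sum_nonneg fun u _ => Finset.sum_nonneg fun u' _ =>
      pCoef_nonneg p m z ψ x y u u' w) (Finset.mem_univ w)

lemma norm_cexp_I_real (t : ℝ) : ‖Complex.exp (Complex.I * (t : ℂ))‖ = 1 := by
  rw [Complex.norm_exp]; simp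

lemma norm_ofReal_coef (u u' w : Fin p) :
    ‖((pCoef p m z ψ x y u u' w : ℝ) : ℂ)‖ = pCoef p m z ψ x y u u' w := by
  rw [Complex.norm_real, Real.norm_eq_abs, abs_of_nonneg (pCoef_nonneg p m z ψ x y u u' w)]

lemma pG1_bound (η : Fin 2 → ℝ) (ω : Fin m → ℝ) (w : Fin p) :
    ‖pG1 p m z ψ x y η ω w‖ ≤ pC p m z ψ x y := by
  refine le_trans ?_ (sum_coef_le p m z ψ x y w)
  refine (norm_sum_le _ _).trans (Finset.sum_le_sum fun u _ => ?_)
  refine (norm_sum_le _ _).trans (Finset.sum_le_sum fun u' _ => ?_)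
  rw [norm_mul, norm_mul, norm_cexp_I_real, norm_cexp_I_real, mul_one, mul_one,
    norm_ofReal_coef]

lemma pG2_bound (β : ℝ) (η : Fin 2 → ℝ) (w : Fin p) :
    ‖pG2 p m z ψ x y β η w‖ ≤ pC p m z ψ x y := by
  refine le_trans ?_ (sum_coef_le p m z ψ x y w)
  refine (norm_sum_le _ _).trans (Finset.sum_le_sum fun u _ => ?_)
  refine (norm_sum_le _ _).trans (Finset.sum_le_sum fun u' _ => ?_)
  rw [norm_mul, norm_mul, norm_cexp_I_real, mul_one, norm_ofReal_coef]
  have h1 : ‖((Real.exp (-(∑ i, (pCψ p m z ψ u u' w i)^2) / (2 * β^2)) : ℝ) : ℂ)‖ ≤ 1 := by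
    rw [Complex.norm_real, Real.norm_eq_abs,
      abs_of_nonneg (Real.exp_nonneg _), Real.exp_le_one_iff]
    have hnum : (0:ℝ) ≤ ∑ i, (pCψ p m z ψ u u' w i)^2 :=
      Finset.sum_nonneg fun i _ => sq_nonneg _
    rcases eq_or_lt_of_le (by positivity : (0:ℝ) ≤ 2 * β^2) with h | h
    · rw [← h, div_zero]
    · exact div_nonpos_of_nonpos_of_nonneg (by linarith) h.le
  calc pCoef p m z ψ x y u u' w * ‖((Real.exp (-(∑ i, (pCψ p m z ψ u u' w i)^2) / (2 * β^2)) : ℝ) : ℂ)‖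
      ≤ pCoef p m z ψ x y u u' w * 1 :=
        mul_le_mul_of_nonneg_left h1 (pCoef_nonneg p m z ψ x y u u' w)
    _ = pCoef p m z ψ x y u u' w := mul_one _

lemma pG1_continuous (η : Fin 2 → ℝ) : Continuous (fun ω => pG1 p m z ψ x y η ω) := by
  unfold pG1; fun_prop

lemma pG2_continuous (β : ℝ) : Continuous (fun η => pG2 p m z ψ x y β η) := by
  unfold pG2; fun_prop

end MainAux

/-- **Proposition 14**: with identity parameters `a₁ = a₂ = a₃ = a₄ = I`, the generalized
matrix-valued convolutional kernel `k(x,y)` is the diagonal matrix whose `w`-th diagonal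
entry equals `čk(x,y)(z_w) = Σ_{z,z'∈Ω} |x(ψ(z,z_w))|·|y(ψ(z',z_w))|·
exp(−‖ψ(z,z_w) − ψ(z',z_w)‖²/(2β²))·exp(−|x̃(ψ(z,z_w)) − ỹ(ψ(z',z_w))|²/(2σ²))`. -/
theorem genConvKernel_identity_params_eq_diagonal (p m : ℕ) (z : Fin p → Fin m → ℤ)
    (ψ : (Fin m → ℤ) → (Fin m → ℤ) → (Fin m → ℤ))
    (hψ : ∀ u w : Fin p, ∃ v : Fin p, ψ (z u) (z w) = z v)
    (β σ : ℝ) (hβ : 0 < β) (hσ : 0 < σ)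
    (x y : (Fin m → ℤ) → ℂ)
    (hx : ∀ u : Fin p, x (z u) ≠ 0) (hy : ∀ u : Fin p, y (z u) ≠ 0) :
    genConvKernel p m z ψ β σ 1 1 1 1 x y =
      Matrix.diagonal (fun w : Fin p =>
        ((∑ u : Fin p, ∑ u' : Fin p,
          ‖x (ψ (z u) (z w))‖ * ‖y (ψ (z u') (z w))‖ *
            Real.exp (-(∑ i : Fin m,
              ((ψ (z u) (z w) i : ℝ) - (ψ (z u') (z w) i : ℝ)) ^ 2) / (2 * β ^ 2)) *
            Real.exp (-(‖
              phPt m x (ψ (z u) (z w)) - phPt m y (ψ (z u') (z w))‖) ^ 2 /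
                (2 * σ ^ 2)) : ℝ) : ℂ)) := by
  unfold genConvKernel
  simp only [Matrix.conjTranspose_one, Matrix.one_mul, Matrix.mul_one]
  have hsum : ∀ (η : Fin 2 → ℝ) (ω : Fin m → ℝ),
      (∑ u : Fin p, ∑ u' : Fin p,
        diagAbsM p m z ψ x (z u) * (diagBM p m z ψ (z u) ω)ᴴ *
          (diagPhaseM p m z ψ x (z u) η)ᴴ * diagPhaseM p m z ψ y (z u') η *
          diagBM p m z ψ (z u') ω * diagAbsM p m z ψ y (z u'))
      = Matrix.diagonal (pG1 p m z ψ x y η ω) := by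
    intro η ω
    simp only [diagAbsM, diagBM, diagPhaseM, Matrix.diagonal_conjTranspose,
      Matrix.diagonal_mul_diagonal, diagonal_sum']
    unfold pG1 pCoef
    refine congrArg Matrix.diagonal ?_
    funext w
    apply Finset.sum_congr rfl
    intro u _
    apply Finset.sum_congr rfl
    intro u' _
    simp only [Pi.mul_apply, Pi.star_apply, RCLike.star_def, ← Complex.exp_conj, _root_.map_mul,
      map_neg, Complex.conj_I, Complex.conj_ofReal, neg_mul, neg_neg]
    refine mul_exp_combine _ _ _ _ _ _ _ _ ?_
    have hψeq : (∑ i, ω i * (ψ (z u) (z w) i : ℝ)) - (∑ i, ω i * (ψ (z u') (z w) i : ℝ))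
        = ∑ i, pCψ p m z ψ u u' w i * ω i := by
      rw [← Finset.sum_sub_distrib]
      refine Finset.sum_congr rfl fun i _ => ?_
      unfold pCψ; ring
    have hφeq : (η 0 * (phPt m x (ψ (z u) (z w))).re + η 1 * (phPt m x (ψ (z u) (z w))).im)
        - (η 0 * (phPt m y (ψ (z u') (z w))).re + η 1 * (phPt m y (ψ (z u') (z w))).im)
        = ∑ i, pCφ p m z ψ x y u u' w i * η i := by
      rw [Fin.sum_univ_two]; unfold pCφ
      simp only [Matrix.cons_val_zero, Matrix.cons_val_one, Matrix.head_cons]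
      ring
    rw [← hψeq, ← hφeq]
    push_cast
    ring
  simp only [hsum]
  have hInt1 : ∀ η, Integrable (fun ω => Matrix.diagonal (pG1 p m z ψ x y η ω)) (gaussPi m β) :=
    fun η => integrable_diag_of_bound (pG1_continuous p m z ψ x y η) _ (pC_nonneg p m z ψ x y)
      (fun a w => pG1_bound p m z ψ x y η a w)
  have hstep2 : ∀ η, (∫ ω, Matrix.diagonal (pG1 p m z ψ x y η ω) ∂gaussPi m β)
      = Matrix.diagonal (pG2 p m z ψ x y β η) := by
    intro η
    ext i j
    rw [integral_matrix_apply (hInt1 η) i j]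
    rcases eq_or_ne i j with rfl | hij
    · simp only [Matrix.diagonal_apply_eq]
      unfold pG1 pG2
      rw [integral_finset_sum _ (fun u _ => integrable_finset_sum _ (fun u' _ =>
        integrable_const_mul_cexp β _ _))]
      refine Finset.sum_congr rfl fun u _ => ?_
      rw [integral_finset_sum _ (fun u' _ => integrable_const_mul_cexp β _ _)]
      refine Finset.sum_congr rfl fun u' _ => ?_
      rw [MeasureTheory.integral_const_mul]
      rw [charGaussPi m hβ (pCψ p m z ψ u u' i)]
    · simp only [Matrix.diagonal_apply_ne _ hij, integral_zero]
  simp only [hstep2]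
  have hInt2 : Integrable (fun η => Matrix.diagonal (pG2 p m z ψ x y β η)) (gaussPi 2 σ) :=
    integrable_diag_of_bound (pG2_continuous p m z ψ x y β) _ (pC_nonneg p m z ψ x y)
      (fun a w => pG2_bound p m z ψ x y β a w)
  ext i j
  rw [integral_matrix_apply hInt2 i j]
  rcases eq_or_ne i j with rfl | hij
  · simp only [Matrix.diagonal_apply_eq]
    unfold pG2
    rw [show ((∑ u : Fin p, ∑ u' : Fin p,
          ‖x (ψ (z u) (z i))‖ * ‖y (ψ (z u') (z i))‖ *
            Real.exp (-(∑ k : Fin m,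
              ((ψ (z u) (z i) k : ℝ) - (ψ (z u') (z i) k : ℝ)) ^ 2) / (2 * β ^ 2)) *
            Real.exp (-(‖
              phPt m x (ψ (z u) (z i)) - phPt m y (ψ (z u') (z i))‖) ^ 2 /
                (2 * σ ^ 2)) : ℝ) : ℂ)
        = ∑ u : Fin p, ∑ u' : Fin p,
          ((‖x (ψ (z u) (z i))‖ * ‖y (ψ (z u') (z i))‖ *
            Real.exp (-(∑ k : Fin m,
              ((ψ (z u) (z i) k : ℝ) - (ψ (z u') (z i) k : ℝ)) ^ 2) / (2 * β ^ 2)) *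
            Real.exp (-(‖
              phPt m x (ψ (z u) (z i)) - phPt m y (ψ (z u') (z i))‖) ^ 2 /
                (2 * σ ^ 2)) : ℝ) : ℂ) by push_cast; rfl]
    rw [integral_finset_sum _ (fun u _ => integrable_finset_sum _ (fun u' _ =>
      (integrable_const_mul_cexp σ _ _).mul_const _))]
    refine Finset.sum_congr rfl fun u _ => ?_
    rw [integral_finset_sum _ (fun u' _ => (integrable_const_mul_cexp σ _ _).mul_const _)]
    refine Finset.sum_congr rfl fun u' _ => ?_
    rw [MeasureTheory.integral_mul_const, MeasureTheory.integral_const_mul,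
      charGaussPi 2 hσ (pCφ p m z ψ x y u u' i)]
    unfold pCoef pCψ pCφ
    have habs : ((phPt m x (ψ (z u) (z i))).re - (phPt m y (ψ (z u') (z i))).re)^2
        + ((phPt m x (ψ (z u) (z i))).im - (phPt m y (ψ (z u') (z i))).im)^2
        = (‖phPt m x (ψ (z u) (z i)) - phPt m y (ψ (z u') (z i))‖)^2 := by
      rw [Complex.sq_norm, Complex.normSq_apply, Complex.sub_re, Complex.sub_im]
      ring
    rw [Fin.sum_univ_two]
    simp only [Matrix.cons_val_zero, Matrix.cons_val_one, Matrix.head_cons]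
    rw [habs]
    push_cast
    ring
  · simp only [Matrix.diagonal_apply_ne _ hij, integral_zero]
end
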